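/- arXiv:1609.09507 — 8 statements merged into one kernel-verified Lean document; each statement's English description precedes it below -/
import Mathlib

section
/- The skew-symmetric n×n Toeplitz matrix A_k with entries (A_k)_{i,j} = ε_{n+i,k+j} for i<j (where ε_{m,ℓ} = 1 if m>ℓ and -1 if m≤ℓ, extended by skew-symmetry) has rank n when n is even, and rank n-1 when n is odd. -/
/-- `ε_{m,ℓ} = 1` if `m > ℓ`, `-1` otherwise. -/
noncomputable def eps (m l : ℕ) : ℚ := if l < m then 1 else -1

/-- The skew-symmetric Toeplitz matrix `A_k` of size `n`, with
`(A_k)_{i,j} = ε_{n+i,k+j}` for `i < j` (indices 1-based). -/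
noncomputable def Amat (n k : ℕ) : Matrix (Fin n) (Fin n) ℚ :=
  fun i j =>
    if i < j then eps (n + i.1 + 1) (k + j.1 + 1)
    else if j < i then -(eps (n + j.1 + 1) (k + i.1 + 1))
    else 0

/-- Integer version of `Amat`. -/
def Aint (n k : ℕ) : Matrix (Fin n) (Fin n) ℤ :=
  fun i j =>
    if i < j then (if k + j.1 + 1 < n + i.1 + 1 then 1 else -1)
    else if j < i then (if k + i.1 + 1 < n + j.1 + 1 then -1 else 1)
    else 0

lemma Amat_eq_map (n k : ℕ) : Amat n k = (Aint n k).map (Int.cast : ℤ → ℚ) := by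
  funext i j
  simp only [Amat, Aint, eps, Matrix.map_apply]
  split_ifs <;> simp

lemma Aint_cast (n k : ℕ) (i j : Fin n) :
    ((Aint n k i j : ℤ) : ZMod 2) = if i = j then 0 else 1 := by
  rcases lt_trichotomy i j with h | h | h
  · simp only [Aint, if_pos h, if_neg h.ne]
    split_ifs <;> decide
  · simp [Aint, h]
  · simp only [Aint, if_neg (asymm h), if_pos h, if_neg h.ne']
    split_ifs <;> decide

lemma det_ne_zero_of_mod2 {m : ℕ} (hm : Even m) (M : Matrix (Fin m) (Fin m) ℤ)
    (h : ∀ i j, ((M i j : ℤ) : ZMod 2) = if i = j then 0 else 1) : M.det ≠ 0 := by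
  intro h0
  have hmap : M.map (Int.castRingHom (ZMod 2)) =
      1 + Matrix.replicateCol Unit (fun _ => (1 : ZMod 2)) * Matrix.replicateRow Unit (fun _ => (1 : ZMod 2)) := by
    funext i j
    simp only [Matrix.map_apply, Int.coe_castRingHom, h, Matrix.add_apply, Matrix.mul_apply,
      Matrix.replicateCol_apply, Matrix.replicateRow_apply, Matrix.one_apply, Finset.sum_const, Finset.card_univ,
      Fintype.card_unit, one_smul, one_mul]
    by_cases hij : i = j <;> simp [hij] <;> decide
  have hdet : ((M.det : ℤ) : ZMod 2) = 1 := by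
    have := (Int.castRingHom (ZMod 2)).map_det M
    rw [RingHom.mapMatrix_apply, hmap, Matrix.det_one_add_replicateCol_mul_replicateRow] at this
    have hm2 : ((m : ℕ) : ZMod 2) = 0 := by
      have : (2 : ℕ) ∣ m := hm.two_dvd
      exact (ZMod.natCast_eq_zero_iff m 2).2 this
    simpa [dotProduct, hm2] using this
  rw [h0] at hdet
  simp at hdet

lemma isUnit_of_mod2 {m : ℕ} (hm : Even m) (M : Matrix (Fin m) (Fin m) ℚ)
    (N : Matrix (Fin m) (Fin m) ℤ) (hMN : M = N.map (Int.cast : ℤ → ℚ))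
    (h : ∀ i j, ((N i j : ℤ) : ZMod 2) = if i = j then 0 else 1) : IsUnit M := by
  have hdet : M.det ≠ 0 := by
    have : M.det = ((N.det : ℤ) : ℚ) := by
      rw [hMN]; exact ((Int.castRingHom ℚ).map_det N).symm
    rw [this]
    exact_mod_cast det_ne_zero_of_mod2 hm N h
  exact (Matrix.isUnit_iff_isUnit_det _).2 (isUnit_iff_ne_zero.2 hdet)

open Matrix in
/-- the rank of `A_k` is `n` when `n` is even, `n-1` when `n` is odd. -/
theorem rank_Amat (n k : ℕ) (hk : k < n) :
    (Amat n k).rank = if Even n then n else n - 1 := by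
  by_cases hn : Even n
  · rw [if_pos hn]
    have hu : IsUnit (Amat n k) :=
      isUnit_of_mod2 hn (Amat n k) (Aint n k) (Amat_eq_map n k) (Aint_cast n k)
    rw [Matrix.rank_of_isUnit _ hu, Fintype.card_fin]
  · rw [if_neg hn]
    have hodd : Odd n := Nat.not_even_iff_odd.1 hn
    -- upper bound: det = 0 since skew-symmetric of odd size
    have hT : (Amat n k)ᵀ = -(Amat n k) := by
      funext i j
      simp only [Matrix.transpose_apply, Matrix.neg_apply, Amat]
      rcases lt_trichotomy i j with h | h | h
      · simp [h, asymm h]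
      · simp [h]
      · simp [h, asymm h]
    have hdet0 : (Amat n k).det = 0 := by
      have h1 : (Amat n k).det = -(Amat n k).det := by
        conv_lhs => rw [← Matrix.det_transpose, hT]
        rw [Matrix.det_neg, Fintype.card_fin, hodd.neg_one_pow, neg_one_mul]
      linarith
    have hlt : (Amat n k).rank < n := by
      rcases lt_or_eq_of_le ((Amat n k).rank_le_width) with h | h
      · exact h
      · exfalso
        have hr : LinearMap.range (Amat n k).mulVecLin = ⊤ := by
          apply Submodule.eq_top_of_finrank_eq
          rw [Module.finrank_fin_fun]
          exact h
        have hsurj : Function.Surjective (Amat n k).mulVec :=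
          LinearMap.range_eq_top.mp hr
        have hu : IsUnit (Amat n k) := Matrix.mulVec_surjective_iff_isUnit.mp hsurj
        exact (isUnit_iff_ne_zero.1 ((Matrix.isUnit_iff_isUnit_det _).1 hu)) hdet0
    -- lower bound via the leading principal (n-1)-submatrix
    have g : Fin (n - 1) → Fin n := Fin.castLE (Nat.sub_le n 1)
    set g : Fin (n - 1) → Fin n := Fin.castLE (Nat.sub_le n 1) with hg
    have hginj : Function.Injective g := Fin.castLE_injective _
    have hm : Even (n - 1) := by
      obtain ⟨m, hm⟩ := hodd
      subst hm
      simpa using even_two_mul m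
    have hsubu : IsUnit ((Amat n k).submatrix g g) := by
      apply isUnit_of_mod2 hm _ ((Aint n k).submatrix g g)
      · rw [Amat_eq_map]; rfl
      · intro i j
        rw [Matrix.submatrix_apply, Aint_cast]
        simp [hginj.eq_iff]
    have hsubrank : ((Amat n k).submatrix g g).rank = n - 1 := by
      rw [Matrix.rank_of_isUnit _ hsubu, Fintype.card_fin]
    have hle : ((Amat n k).submatrix g g).rank ≤ (Amat n k).rank := by
      have key : (Amat n k).submatrix g g =
          ((1 : Matrix (Fin n) (Fin n) ℚ).submatrix g ⇑(Equiv.refl (Fin n))) * (Amat n k) *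
            ((1 : Matrix (Fin n) (Fin n) ℚ).submatrix ⇑(Equiv.refl (Fin n)) g) := by
        rw [Matrix.one_submatrix_mul, Matrix.mul_submatrix_one]
        simp
      rw [key]
      exact le_trans (Matrix.rank_mul_le_left _ _) (Matrix.rank_mul_le_right _ _)
    omega
end

section
/- Let n = 2k+1 and m ∈ S_i^{(n,k)} with m_{2i+1} = n. Then the cyclically shifted tuple (1, m_1+1, m_2+1, ..., m_{2i}+1) belongs to S_i^{(n,k)}. Consequently, the polynomials K_i = Σ_{m∈S_i^{(2k+1,k)}} x_{m_1}⋯x_{m_{2i+1}} are invariant under the cyclic permutation of variables x_j ↦ x_{j+1 mod 2k+1}. -/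
set_option maxHeartbeats 1000000


/-- Membership in `S_i^{(n,k)}`: `m = (m_1,…,m_{2i+1})` (0-based indices, 1-based values)
is strictly increasing in `{1,…,n}` and satisfies
`m_{i+s} < m_s + n - k ≤ m_{i+s+1}` for `s = 1,…,i` and `m_{2i+1} < m_{i+1} + n - k`. -/
def Smem (n k i : ℕ) (m : Fin (2 * i + 1) → ℕ) : Prop :=
  StrictMono m ∧ (∀ a, 1 ≤ m a ∧ m a ≤ n) ∧
  (∀ s : Fin i,
      m ⟨i + s.1, by have := s.isLt; omega⟩ < m ⟨s.1, by have := s.isLt; omega⟩ + (n - k) ∧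
      m ⟨s.1, by have := s.isLt; omega⟩ + (n - k) ≤ m ⟨i + s.1 + 1, by have := s.isLt; omega⟩) ∧
  m ⟨2 * i, by omega⟩ < m ⟨i, by omega⟩ + (n - k)

/-- The analogue of `Smem (2k+1) k i` for tuples with values in `Fin (2k+1)`
(0-based values; 1-based values are `(m a).1 + 1`, and `n - k = k + 1`). -/
def SmemF (k i : ℕ) (m : Fin (2 * i + 1) → Fin (2 * k + 1)) : Prop :=
  (∀ a b, a < b → m a < m b) ∧
  (∀ s : Fin i,
      (m ⟨i + s.1, by have := s.isLt; omega⟩).1 + 1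
          < (m ⟨s.1, by have := s.isLt; omega⟩).1 + 1 + (k + 1) ∧
      (m ⟨s.1, by have := s.isLt; omega⟩).1 + 1 + (k + 1)
          ≤ (m ⟨i + s.1 + 1, by have := s.isLt; omega⟩).1 + 1) ∧
  (m ⟨2 * i, by omega⟩).1 + 1 < (m ⟨i, by omega⟩).1 + 1 + (k + 1)

open scoped Classical in
/-- The set `S_i^{(2k+1,k)}` as a finite set of tuples. -/
noncomputable def SS (k i : ℕ) : Finset (Fin (2 * i + 1) → Fin (2 * k + 1)) :=
  Finset.univ.filter (SmemF k i)

/-- The Itoh polynomial `K_i = Σ_{m ∈ S_i^{(2k+1,k)}} x_{m_1} ⋯ x_{m_{2i+1}}`. -/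
noncomputable def Kpoly (k i : ℕ) (x : Fin (2 * k + 1) → ℝ) : ℝ :=
  ∑ m ∈ SS k i, ∏ a, x (m a)

lemma mcast {N : ℕ} (m : Fin N → ℕ) {a b : ℕ} (ha : a < N) (hb : b < N) (hab : a = b) :
    m ⟨a, ha⟩ = m ⟨b, hb⟩ := by subst hab; rfl

lemma key (k i : ℕ) (m : Fin (2 * i + 1) → ℕ)
    (hm : Smem (2 * k + 1) k i m) (h : m ⟨2 * i, by omega⟩ = 2 * k + 1) :
    Smem (2 * k + 1) k i
      (fun a => if a.1 = 0 then 1 else m ⟨a.1 - 1, by omega⟩ + 1) := by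
  obtain ⟨hmono, hbd, hcond, hlast⟩ := hm
  refine ⟨?_, ?_, ?_, ?_⟩
  · intro a b hab
    have hab' : a.1 < b.1 := hab
    have hbI := b.isLt
    show (if a.1 = 0 then 1 else m ⟨a.1 - 1, by omega⟩ + 1)
        < (if b.1 = 0 then 1 else m ⟨b.1 - 1, by omega⟩ + 1)
    rw [if_neg (show ¬(b.1 = 0) by omega)]
    by_cases ha : a.1 = 0
    · rw [if_pos ha]
      have := (hbd ⟨b.1 - 1, by omega⟩).1
      omega
    · rw [if_neg ha]
      have : m ⟨a.1 - 1, by omega⟩ < m ⟨b.1 - 1, by omega⟩ :=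
        hmono (show a.1 - 1 < b.1 - 1 by omega)
      omega
  · intro a
    have haI := a.isLt
    show 1 ≤ (if a.1 = 0 then 1 else m ⟨a.1 - 1, by omega⟩ + 1) ∧
        (if a.1 = 0 then 1 else m ⟨a.1 - 1, by omega⟩ + 1) ≤ 2 * k + 1
    by_cases ha : a.1 = 0
    · rw [if_pos ha]; omega
    · rw [if_neg ha]
      refine ⟨by omega, ?_⟩
      rcases Nat.lt_or_ge (a.1 - 1) (2 * i) with hl | hl
      · have h2 : m ⟨a.1 - 1, by omega⟩ < m ⟨2 * i, by omega⟩ :=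
          hmono (show a.1 - 1 < 2 * i from hl)
        omega
      · have e : m ⟨a.1 - 1, by omega⟩ = m ⟨2 * i, by omega⟩ := mcast m _ _ (by omega)
        omega
  · intro s
    have hs := s.isLt
    constructor
    · show (if i + s.1 = 0 then 1 else m ⟨i + s.1 - 1, by omega⟩ + 1)
          < (if s.1 = 0 then 1 else m ⟨s.1 - 1, by omega⟩ + 1) + (2 * k + 1 - k)
      rw [if_neg (show ¬(i + s.1 = 0) by omega)]
      by_cases hs0 : s.1 = 0
      · rw [if_pos hs0]
        have hA : m ⟨i - 1, by omega⟩ + (2 * k + 1 - k) ≤ m ⟨i + (i - 1) + 1, by omega⟩ :=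
          (hcond ⟨i - 1, by omega⟩).2
        have eA : m ⟨i + (i - 1) + 1, by omega⟩ = m ⟨2 * i, by omega⟩ := mcast m _ _ (by omega)
        have e2 : m ⟨i + s.1 - 1, by omega⟩ = m ⟨i - 1, by omega⟩ := mcast m _ _ (by omega)
        omega
      · rw [if_neg hs0]
        have hc1 : m ⟨i + (s.1 - 1), by omega⟩ < m ⟨s.1 - 1, by omega⟩ + (2 * k + 1 - k) :=
          (hcond ⟨s.1 - 1, by omega⟩).1
        have e1 : m ⟨i + (s.1 - 1), by omega⟩ = m ⟨i + s.1 - 1, by omega⟩ := mcast m _ _ (by omega)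
        omega
    · show (if s.1 = 0 then 1 else m ⟨s.1 - 1, by omega⟩ + 1) + (2 * k + 1 - k)
          ≤ (if i + s.1 + 1 = 0 then 1 else m ⟨i + s.1 + 1 - 1, by omega⟩ + 1)
      rw [if_neg (show ¬(i + s.1 + 1 = 0) by omega)]
      by_cases hs0 : s.1 = 0
      · rw [if_pos hs0]
        have e2 : m ⟨i + s.1 + 1 - 1, by omega⟩ = m ⟨i, by omega⟩ := mcast m _ _ (by omega)
        have hB := hlast
        omega
      · rw [if_neg hs0]
        have hc2 : m ⟨s.1 - 1, by omega⟩ + (2 * k + 1 - k) ≤ m ⟨i + (s.1 - 1) + 1, by omega⟩ :=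
          (hcond ⟨s.1 - 1, by omega⟩).2
        have e2 : m ⟨i + (s.1 - 1) + 1, by omega⟩ = m ⟨i + s.1 + 1 - 1, by omega⟩ :=
          mcast m _ _ (by omega)
        omega
  · show (if 2 * i = 0 then 1 else m ⟨2 * i - 1, by omega⟩ + 1)
        < (if i = 0 then 1 else m ⟨i - 1, by omega⟩ + 1) + (2 * k + 1 - k)
    by_cases hi : i = 0
    · rw [if_pos (show 2 * i = 0 by omega), if_pos hi]; omega
    · rw [if_neg (show ¬(2 * i = 0) by omega), if_neg hi]
      have hc : m ⟨i + (i - 1), by omega⟩ < m ⟨i - 1, by omega⟩ + (2 * k + 1 - k) :=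
        (hcond ⟨i - 1, by omega⟩).1
      have e1 : m ⟨i + (i - 1), by omega⟩ = m ⟨2 * i - 1, by omega⟩ := mcast m _ _ (by omega)
      omega



lemma key2 (k i : ℕ) (m : Fin (2 * i + 1) → ℕ)
    (hm : Smem (2 * k + 1) k i m) (h : m ⟨2 * i, by omega⟩ < 2 * k + 1) :
    Smem (2 * k + 1) k i (fun a => m a + 1) := by
  obtain ⟨hmono, hbd, hcond, hlast⟩ := hm
  refine ⟨?_, ?_, ?_, ?_⟩
  · intro a b hab
    have := hmono hab
    show m a + 1 < m b + 1
    omega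
  · intro a
    have h1 := hbd a
    have hle : m a ≤ m ⟨2 * i, by omega⟩ := hmono.monotone (Nat.le_of_lt_succ a.isLt)
    constructor
    · show 1 ≤ m a + 1
      omega
    · show m a + 1 ≤ 2 * k + 1
      omega
  · intro s
    have hs := s.isLt
    have hc1 : m ⟨i + s.1, by omega⟩ < m ⟨s.1, by omega⟩ + (2 * k + 1 - k) := (hcond s).1
    have hc2 : m ⟨s.1, by omega⟩ + (2 * k + 1 - k) ≤ m ⟨i + s.1 + 1, by omega⟩ := (hcond s).2
    constructor
    · show m ⟨i + s.1, by omega⟩ + 1 < m ⟨s.1, by omega⟩ + 1 + (2 * k + 1 - k)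
      omega
    · show m ⟨s.1, by omega⟩ + 1 + (2 * k + 1 - k) ≤ m ⟨i + s.1 + 1, by omega⟩ + 1
      omega
  · have hc : m ⟨2 * i, by omega⟩ < m ⟨i, by omega⟩ + (2 * k + 1 - k) := hlast
    show m ⟨2 * i, by omega⟩ + 1 < m ⟨i, by omega⟩ + 1 + (2 * k + 1 - k)
    omega

lemma lt2i (i : ℕ) : 2 * i < 2 * i + 1 := Nat.lt_succ_self _

lemma smemF_iff (k i : ℕ) (m : Fin (2 * i + 1) → Fin (2 * k + 1)) :
    SmemF k i m ↔ Smem (2 * k + 1) k i (fun a => (m a).1 + 1) := by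
  constructor
  · rintro ⟨h1, h2, h3⟩
    refine ⟨?_, ?_, ?_, ?_⟩
    · intro a b hab
      have := h1 a b hab
      rw [Fin.lt_def] at this
      show (m a).1 + 1 < (m b).1 + 1
      omega
    · intro a
      have := (m a).isLt
      constructor
      · show 1 ≤ (m a).1 + 1
        omega
      · show (m a).1 + 1 ≤ 2 * k + 1
        omega
    · intro s
      have hc := h2 s
      have hs := s.isLt
      constructor
      · show (m ⟨i + s.1, by omega⟩).1 + 1 < (m ⟨s.1, by omega⟩).1 + 1 + (2 * k + 1 - k)
        omega
      · show (m ⟨s.1, by omega⟩).1 + 1 + (2 * k + 1 - k) ≤ (m ⟨i + s.1 + 1, by omega⟩).1 + 1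
        omega
    · show (m ⟨2 * i, lt2i i⟩).1 + 1 < (m ⟨i, by omega⟩).1 + 1 + (2 * k + 1 - k)
      omega
  · rintro ⟨h1, h2, h3, h4⟩
    refine ⟨?_, ?_, ?_⟩
    · intro a b hab
      have := h1 hab
      have h5 : (m a).1 + 1 < (m b).1 + 1 := this
      rw [Fin.lt_def]
      omega
    · intro s
      have hs := s.isLt
      have hc1 : (m ⟨i + s.1, by omega⟩).1 + 1 < (m ⟨s.1, by omega⟩).1 + 1 + (2 * k + 1 - k) :=
        (h3 s).1
      have hc2 : (m ⟨s.1, by omega⟩).1 + 1 + (2 * k + 1 - k) ≤ (m ⟨i + s.1 + 1, by omega⟩).1 + 1 :=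
        (h3 s).2
      exact ⟨by omega, by omega⟩
    · have hc : (m ⟨2 * i, lt2i i⟩).1 + 1 < (m ⟨i, by omega⟩).1 + 1 + (2 * k + 1 - k) := h4
      omega

def phi (k i : ℕ) (m : Fin (2 * i + 1) → Fin (2 * k + 1)) : Fin (2 * i + 1) → Fin (2 * k + 1) :=
  if (m ⟨2 * i, lt2i i⟩).1 = 2 * k then (fun a => m (a - 1) + 1) else (fun a => m a + 1)

lemma le_top_val (k i : ℕ) (m : Fin (2 * i + 1) → Fin (2 * k + 1))
    (h1 : ∀ a b, a < b → m a < m b) (a : Fin (2 * i + 1)) :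
    (m a).1 ≤ (m ⟨2 * i, lt2i i⟩).1 := by
  rcases Nat.lt_or_ge a.1 (2 * i) with hl | hl
  · exact le_of_lt (h1 a ⟨2 * i, lt2i i⟩ (by rw [Fin.lt_def]; exact hl))
  · have : a = ⟨2 * i, lt2i i⟩ := Fin.ext (show a.1 = 2 * i by have := a.isLt; omega)
    rw [this]

lemma val_phi_A (k i : ℕ) (m : Fin (2 * i + 1) → Fin (2 * k + 1))
    (h1 : ∀ a b, a < b → m a < m b)
    (hmax : ¬((m ⟨2 * i, lt2i i⟩).1 = 2 * k)) (a : Fin (2 * i + 1)) :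
    (phi k i m a).1 = (m a).1 + 1 := by
  have hle := le_top_val k i m h1 a
  have htop := (m ⟨2 * i, lt2i i⟩).isLt
  unfold phi
  rw [if_neg hmax]
  exact Fin.val_add_one_of_lt (by rw [Fin.lt_def, Fin.val_last]; omega)

lemma zero_sub_one (i : ℕ) : ((0 : Fin (2 * i + 1)) - 1) = (⟨2 * i, lt2i i⟩ : Fin (2 * i + 1)) := by
  apply Fin.ext
  rw [Fin.coe_sub_one, if_pos rfl]

lemma val_phi_B_zero (k i : ℕ) (m : Fin (2 * i + 1) → Fin (2 * k + 1))
    (hmax : (m ⟨2 * i, lt2i i⟩).1 = 2 * k) :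
    (phi k i m 0).1 = 0 := by
  unfold phi
  rw [if_pos hmax, zero_sub_one, Fin.val_add, Fin.val_one', hmax]
  rcases k with _ | j
  · simp
  · rw [Nat.mod_eq_of_lt (show 1 < 2 * (j + 1) + 1 by omega)]
    exact Nat.mod_self _

lemma sub_one_eq (i : ℕ) (a : Fin (2 * i + 1)) (ha : a.1 ≠ 0) :
    a - 1 = (⟨a.1 - 1, by have := a.isLt; omega⟩ : Fin (2 * i + 1)) := by
  apply Fin.ext
  rw [Fin.coe_sub_one, if_neg (fun h => ha (by rw [h]; rfl))]

lemma val_phi_B (k i : ℕ) (m : Fin (2 * i + 1) → Fin (2 * k + 1))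
    (h1 : ∀ a b, a < b → m a < m b)
    (hmax : (m ⟨2 * i, lt2i i⟩).1 = 2 * k) (a : Fin (2 * i + 1)) (ha : a.1 ≠ 0) :
    (phi k i m a).1 = (m ⟨a.1 - 1, by have := a.isLt; omega⟩).1 + 1 := by
  have haI := a.isLt
  have hlt : (m ⟨a.1 - 1, by omega⟩).1 < (m ⟨2 * i, lt2i i⟩).1 := by
    rw [← Fin.lt_def]
    exact h1 _ _ (by rw [Fin.lt_def]; show a.1 - 1 < 2 * i; omega)
  unfold phi
  rw [if_pos hmax, sub_one_eq i a ha]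
  exact Fin.val_add_one_of_lt (by rw [Fin.lt_def, Fin.val_last]; omega)

lemma phi_mem (k i : ℕ) (m : Fin (2 * i + 1) → Fin (2 * k + 1)) (hm : SmemF k i m) :
    SmemF k i (phi k i m) := by
  rw [smemF_iff]
  by_cases hmax : (m ⟨2 * i, lt2i i⟩).1 = 2 * k
  · have hM : Smem (2 * k + 1) k i (fun a => (m a).1 + 1) := (smemF_iff k i m).1 hm
    have hkey := key k i (fun a => (m a).1 + 1) hM
      (by show (m ⟨2 * i, lt2i i⟩).1 + 1 = 2 * k + 1; omega)
    have hfe : (fun a : Fin (2 * i + 1) => (phi k i m a).1 + 1)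
        = (fun a : Fin (2 * i + 1) => if a.1 = 0 then 1
            else (fun b : Fin (2 * i + 1) => (m b).1 + 1) ⟨a.1 - 1, by have := a.isLt; omega⟩ + 1) := by
      funext a
      by_cases ha : a.1 = 0
      · have h0 : a = 0 := Fin.ext (by rw [ha]; rfl)
        rw [if_pos ha, h0, val_phi_B_zero k i m hmax]
      · rw [if_neg ha, val_phi_B k i m hm.1 hmax a ha]
    rw [hfe]
    exact hkey
  · have hM : Smem (2 * k + 1) k i (fun a => (m a).1 + 1) := (smemF_iff k i m).1 hm
    have hkey := key2 k i (fun a => (m a).1 + 1) hM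
      (by show (m ⟨2 * i, lt2i i⟩).1 + 1 < 2 * k + 1
          have := (m ⟨2 * i, lt2i i⟩).isLt
          omega)
    have hfe : (fun a : Fin (2 * i + 1) => (phi k i m a).1 + 1)
        = (fun a : Fin (2 * i + 1) => (m a).1 + 1 + 1) := by
      funext a
      rw [val_phi_A k i m hm.1 hmax a]
    rw [hfe]
    exact hkey

lemma phi_inj (k i : ℕ) (m1 m2 : Fin (2 * i + 1) → Fin (2 * k + 1))
    (hm1 : SmemF k i m1) (hm2 : SmemF k i m2) (heq : phi k i m1 = phi k i m2) : m1 = m2 := by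
  unfold phi at heq
  by_cases hx1 : (m1 ⟨2 * i, lt2i i⟩).1 = 2 * k <;>
    by_cases hx2 : (m2 ⟨2 * i, lt2i i⟩).1 = 2 * k
  · rw [if_pos hx1, if_pos hx2] at heq
    funext b
    have e1 := congrFun heq (b + 1)
    rw [add_sub_cancel_right] at e1
    exact add_right_cancel e1
  · exfalso
    rw [if_pos hx1, if_neg hx2] at heq
    have e0 := congrFun heq 0
    rw [zero_sub_one] at e0
    have e0' : m1 ⟨2 * i, lt2i i⟩ = m2 0 := add_right_cancel e0
    have hle := le_top_val k i m2 hm2.1 0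
    have := (m2 ⟨2 * i, lt2i i⟩).isLt
    rw [e0'] at hx1
    omega
  · exfalso
    rw [if_neg hx1, if_pos hx2] at heq
    have e0 := congrFun heq 0
    rw [zero_sub_one] at e0
    have e0' : m1 0 = m2 ⟨2 * i, lt2i i⟩ := add_right_cancel e0
    have hle := le_top_val k i m1 hm1.1 0
    have := (m1 ⟨2 * i, lt2i i⟩).isLt
    rw [e0'] at hle
    omega
  · rw [if_neg hx1, if_neg hx2] at heq
    funext b
    exact add_right_cancel (congrFun heq b)

lemma prod_phi (k i : ℕ) (x : Fin (2 * k + 1) → ℝ) (m : Fin (2 * i + 1) → Fin (2 * k + 1)) :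
    ∏ a, x (phi k i m a) = ∏ a, x (m a + 1) := by
  unfold phi
  split_ifs with h
  · exact Fintype.prod_equiv (Equiv.subRight (1 : Fin (2 * i + 1)))
      (fun a => x (m (a - 1) + 1)) (fun b => x (m b + 1)) (fun a => rfl)
  · rfl

lemma part2 (k i : ℕ) (x : Fin (2 * k + 1) → ℝ) :
    Kpoly k i (fun j => x (j + 1)) = Kpoly k i x := by
  classical
  unfold Kpoly
  have hmem : ∀ m ∈ SS k i, phi k i m ∈ SS k i := by
    intro m hm
    rw [SS, Finset.mem_filter] at hm ⊢
    exact ⟨Finset.mem_univ _, phi_mem k i m hm.2⟩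
  have hinj : ∀ m1 ∈ SS k i, ∀ m2 ∈ SS k i, phi k i m1 = phi k i m2 → m1 = m2 := by
    intro m1 h1 m2 h2 h
    rw [SS, Finset.mem_filter] at h1 h2
    exact phi_inj k i m1 m2 h1.2 h2.2 h
  have himg : (SS k i).image (phi k i) = SS k i := by
    apply Finset.eq_of_subset_of_card_le
    · intro y hy
      obtain ⟨m, hm, rfl⟩ := Finset.mem_image.1 hy
      exact hmem m hm
    · rw [Finset.card_image_of_injOn hinj]
  conv_rhs => rw [← himg]
  rw [Finset.sum_image hinj]
  exact Finset.sum_congr rfl (fun m _ => (prod_phi k i x m).symm)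

/-- for `n = 2k+1`, if `m ∈ S_i^{(n,k)}` has `m_{2i+1} = n` then the
cyclically shifted tuple `(1, m_1+1, …, m_{2i}+1)` belongs to `S_i^{(n,k)}`; consequently
the polynomials `K_i` are invariant under the cyclic permutation `x_j ↦ x_{j+1 mod 2k+1}`. -/
theorem Smem_cyclic_and_K_invariant (k i : ℕ) :
    (∀ m : Fin (2 * i + 1) → ℕ, Smem (2 * k + 1) k i m →
      m ⟨2 * i, by omega⟩ = 2 * k + 1 →
      Smem (2 * k + 1) k i
        (fun a => if a.1 = 0 then 1 else m ⟨a.1 - 1, by omega⟩ + 1)) ∧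
    (∀ x : Fin (2 * k + 1) → ℝ, Kpoly k i (fun j => x (j + 1)) = Kpoly k i x) := by
  exact ⟨fun m hm h => key k i m hm h, fun x => part2 k i x⟩
end

section
/- For n > 2k+1, the map ρ : S_i^{(n-1,k)} → S_i^{(n,k)} defined by m'_s = m_s for s ≤ i+1 and m'_s = m_s + 1 for s ≥ i+2 is well-defined and injective. -/
/-- The map `ρ`: keep the first `i+1` entries, shift the last `i` entries by one
(0-based index `a` corresponds to 1-based index `a+1`, so `a ≤ i` means `s ≤ i+1`). -/
def rhoMap (i : ℕ) (m : Fin (2 * i + 1) → ℕ) : Fin (2 * i + 1) → ℕ :=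
  fun a => if a.1 ≤ i then m a else m a + 1

/-- for `n > 2k+1`, `ρ : S_i^{(n-1,k)} → S_i^{(n,k)}` is well defined and
injective. -/
theorem rho_wellDefined_injective (n k i : ℕ) (hn : 2 * k + 1 < n) :
    (∀ m : Fin (2 * i + 1) → ℕ, Smem (n - 1) k i m → Smem n k i (rhoMap i m)) ∧
    (∀ m m' : Fin (2 * i + 1) → ℕ, Smem (n - 1) k i m → Smem (n - 1) k i m' →
      rhoMap i m = rhoMap i m' → m = m') := by
  constructor
  · rintro m ⟨hmono, hb, hcond, hlast⟩
    refine ⟨?_, ?_, ?_, ?_⟩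
    · intro a b hab
      have h := hmono hab
      have hab' : a.1 < b.1 := hab
      simp only [rhoMap]
      split <;> split <;> omega
    · intro a
      have h := hb a
      simp only [rhoMap]
      split <;> omega
    · intro s
      have h := hcond s
      have hs := s.isLt
      simp only [rhoMap]
      constructor
      · split <;> split <;> omega
      · split <;> split <;> omega
    · have hs := hlast
      simp only [rhoMap]
      split <;> split <;> omega
  · rintro m m' _ _ h
    funext a
    have h' := congrFun h a
    simp only [rhoMap] at h'
    split at h' <;> omega
end

section
/- For n > 2k+1, the map ρ̂ : Ŝ_i^{(n-1,k)} → Ŝ_i^{(n,k)}, given by (m_1,...,m_i,m_{i+2},...,m_{2i+1}) ↦ (m_1,...,m_i,m_{i+2}+1,...,m_{2i+1}+1), is a bijection. Consequently #Ŝ_i^{(n,k)} is independent of n for all n ≥ 2k+1. -/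
/-- Deletion of the middle entry of a `(2i+1)`-tuple. -/
def delMid (i : ℕ) (m : Fin (2 * i + 1) → ℕ) : Fin (2 * i) → ℕ :=
  fun b => if h : b.1 < i then m ⟨b.1, by omega⟩ else m ⟨b.1 + 1, by have := b.isLt; omega⟩

/-- Membership in `Ŝ_i^{(n,k)}`: the `2i`-tuples obtained from elements of
`S_i^{(n,k)}` by deleting the middle entry. -/
def hSmem (n k i : ℕ) (q : Fin (2 * i) → ℕ) : Prop :=
  ∃ m, Smem n k i m ∧ q = delMid i m

/-- The map `ρ̂`: keep the first `i` entries, shift the last `i` entries by one. -/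
def rhoHat (i : ℕ) (q : Fin (2 * i) → ℕ) : Fin (2 * i) → ℕ :=
  fun b => if b.1 < i then q b else q b + 1

/-! ### Auxiliary machinery -/

/-- Extend a `Fin`-indexed tuple to a `ℕ`-indexed one. -/
def extT (i : ℕ) (m : Fin (2 * i + 1) → ℕ) : ℕ → ℕ :=
  fun j => m ⟨min j (2 * i), by omega⟩

lemma extT_eq (i : ℕ) (m : Fin (2 * i + 1) → ℕ) (j : ℕ) (h : j < 2 * i + 1) :
    extT i m j = m ⟨j, h⟩ := by
  unfold extT
  congr 1
  exact Fin.ext (by simp; omega)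

lemma extT_apply (i : ℕ) (m : Fin (2 * i + 1) → ℕ) (a : Fin (2 * i + 1)) :
    extT i m a.1 = m a := by
  rw [extT_eq i m a.1 a.isLt]

lemma Smem_iff (n k i : ℕ) (m : Fin (2 * i + 1) → ℕ) :
    Smem n k i m ↔
      ((∀ a b : ℕ, a < b → b < 2 * i + 1 → extT i m a < extT i m b) ∧
       (∀ a : ℕ, a < 2 * i + 1 → 1 ≤ extT i m a ∧ extT i m a ≤ n) ∧
       (∀ s : ℕ, s < i →
          extT i m (i + s) < extT i m s + (n - k) ∧
          extT i m s + (n - k) ≤ extT i m (i + s + 1)) ∧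
       extT i m (2 * i) < extT i m i + (n - k)) := by
  constructor
  · rintro ⟨h1, h2, h3, h4⟩
    refine ⟨?_, ?_, ?_, ?_⟩
    · intro a b hab hb
      have h := h1 (a := ⟨a, by omega⟩) (b := ⟨b, hb⟩) hab
      simpa only [← extT_apply i m] using h
    · intro a ha
      have h := h2 ⟨a, ha⟩
      simpa only [← extT_apply i m] using h
    · intro s hs
      have h := h3 ⟨s, hs⟩
      simpa only [← extT_apply i m] using h
    · simpa only [← extT_apply i m] using h4
  · rintro ⟨h1, h2, h3, h4⟩
    refine ⟨?_, ?_, ?_, ?_⟩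
    · intro a b hab
      simp only [← extT_apply i m]
      exact h1 a.1 b.1 hab b.isLt
    · intro a
      simp only [← extT_apply i m]
      exact h2 a.1 a.isLt
    · intro s
      simp only [← extT_apply i m]
      exact h3 s.1 s.isLt
    · simp only [← extT_apply i m]
      exact h4

lemma delMid_eq (i : ℕ) (m : Fin (2 * i + 1) → ℕ) (b : Fin (2 * i)) :
    delMid i m b = if b.1 < i then extT i m b.1 else extT i m (b.1 + 1) := by
  unfold delMid
  split_ifs with h
  · exact (extT_eq i m b.1 (by omega)).symm
  · exact (extT_eq i m (b.1 + 1) (by have := b.isLt; omega)).symm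

/-- Shift the entries after the middle one up by one. -/
def shiftUp (i : ℕ) (m : Fin (2 * i + 1) → ℕ) : Fin (2 * i + 1) → ℕ :=
  fun a => if a.1 ≤ i then m a else m a + 1

lemma extT_shiftUp (i : ℕ) (m : Fin (2 * i + 1) → ℕ) (j : ℕ) (h : j < 2 * i + 1) :
    extT i (shiftUp i m) j = if j ≤ i then extT i m j else extT i m j + 1 := by
  rw [extT_eq i _ j h, extT_eq i m j h]
  rfl

/-- Shift the entries after the middle one down by one, and replace the middle
entry by `k+1`. -/
def shiftDown (i k : ℕ) (m : Fin (2 * i + 1) → ℕ) : Fin (2 * i + 1) → ℕ :=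
  fun a => if a.1 < i then m a else if a.1 = i then k + 1 else m a - 1

lemma extT_shiftDown (i k : ℕ) (m : Fin (2 * i + 1) → ℕ) (j : ℕ) (h : j < 2 * i + 1) :
    extT i (shiftDown i k m) j =
      if j < i then extT i m j else if j = i then k + 1 else extT i m j - 1 := by
  rw [extT_eq i _ j h, extT_eq i m j h]
  rfl

lemma rhoHat_maps (n k i : ℕ) (hn : 2 * k + 1 < n) :
    ∀ q, hSmem (n - 1) k i q → hSmem n k i (rhoHat i q) := by
  rintro q ⟨m, hm, rfl⟩
  rw [Smem_iff] at hm
  obtain ⟨h1, h2, h3, h4⟩ := hm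
  refine ⟨shiftUp i m, ?_, ?_⟩
  · rw [Smem_iff]
    refine ⟨?_, ?_, ?_, ?_⟩
    · intro a b hab hb
      rw [extT_shiftUp i m a (by omega), extT_shiftUp i m b hb]
      have := h1 a b hab hb
      split_ifs <;> omega
    · intro a ha
      rw [extT_shiftUp i m a ha]
      have := h2 a ha
      split_ifs <;> omega
    · intro s hs
      rw [extT_shiftUp i m (i + s) (by omega), extT_shiftUp i m s (by omega),
        extT_shiftUp i m (i + s + 1) (by omega)]
      have := h3 s hs
      split_ifs <;> omega
    · rw [extT_shiftUp i m (2 * i) (by omega), extT_shiftUp i m i (by omega)]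
      split_ifs <;> omega
  · funext b
    have hb := b.isLt
    simp only [rhoHat]
    rw [delMid_eq, delMid_eq, extT_shiftUp i m b.1 (by omega),
      extT_shiftUp i m (b.1 + 1) (by omega)]
    split_ifs <;> omega

lemma rhoHat_inj (i : ℕ) : Function.Injective (rhoHat i) := by
  intro q q' h
  funext b
  have hb := congrFun h b
  simp only [rhoHat] at hb
  split_ifs at hb <;> omega

lemma rhoHat_surj (n k i : ℕ) (hn : 2 * k + 1 < n) :
    ∀ q', hSmem n k i q' → ∃ q, hSmem (n - 1) k i q ∧ rhoHat i q = q' := by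
  rintro q' ⟨M, hM, rfl⟩
  rw [Smem_iff] at hM
  obtain ⟨h1, h2, h3, h4⟩ := hM
  have hEk : ∀ x, x < i → extT i M x ≤ k := by
    intro x hx
    have e1 := (h3 x hx).2
    have e2 := (h2 (i + x + 1) (by omega)).2
    omega
  have hEbig : ∀ x, i < x → x < 2 * i + 1 → k + 3 ≤ extT i M x := by
    intro x hx hx2
    have hi : 0 < i := by omega
    have e1 := (h3 0 hi).2
    have e2 := (h2 0 (by omega)).1
    have e3 : extT i M (i + 0 + 1) ≤ extT i M x := by
      rcases eq_or_lt_of_le (show i + 0 + 1 ≤ x by omega) with h | h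
      · rw [h]
      · exact le_of_lt (h1 _ _ h hx2)
    omega
  refine ⟨delMid i (shiftDown i k M), ⟨shiftDown i k M, ?_, rfl⟩, ?_⟩
  · rw [Smem_iff]
    refine ⟨?_, ?_, ?_, ?_⟩
    · intro a b hab hb
      rw [extT_shiftDown i k M a (by omega), extT_shiftDown i k M b hb]
      have e0 := h1 a b hab hb
      rcases Nat.lt_trichotomy a i with ha | ha | ha <;>
        rcases Nat.lt_trichotomy b i with hb' | hb' | hb' <;>
        first
          | (split_ifs <;> omega)
          | (have := hEk a (by omega)
             first
               | (split_ifs <;> omega)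
               | (have := hEbig b (by omega) hb; split_ifs <;> omega))
          | (have := hEbig b (by omega) hb
             have := (h2 a (by omega)).1
             split_ifs <;> omega)
    · intro a ha
      rw [extT_shiftDown i k M a ha]
      rcases Nat.lt_trichotomy a i with h | h | h
      · have := hEk a h
        have := h2 a ha
        split_ifs <;> omega
      · split_ifs <;> omega
      · have := hEbig a h ha
        have := h2 a ha
        split_ifs <;> omega
    · intro s hs
      rw [extT_shiftDown i k M (i + s) (by omega), extT_shiftDown i k M s (by omega),
        extT_shiftDown i k M (i + s + 1) (by omega)]
      have := h3 s hs
      have := h2 s (by omega)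
      split_ifs <;> omega
    · rw [extT_shiftDown i k M (2 * i) (by omega), extT_shiftDown i k M i (by omega)]
      have := h2 (2 * i) (by omega)
      split_ifs <;> omega
  · funext b
    have hb := b.isLt
    simp only [rhoHat]
    rw [delMid_eq i (shiftDown i k M) b, delMid_eq i M b,
      extT_shiftDown i k M b.1 (by omega), extT_shiftDown i k M (b.1 + 1) (by omega)]
    have := h2 (b.1 + 1) (by omega)
    split_ifs <;> omega

/-- for `n > 2k+1`, `ρ̂ : Ŝ_i^{(n-1,k)} → Ŝ_i^{(n,k)}` is a bijection;
consequently `#Ŝ_i^{(n,k)}` is independent of `n` for `n ≥ 2k+1`. -/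
theorem rhoHat_bijective (n k i : ℕ) (hn : 2 * k + 1 < n) :
    ((∀ q, hSmem (n - 1) k i q → hSmem n k i (rhoHat i q)) ∧
     (∀ q q', hSmem (n - 1) k i q → hSmem (n - 1) k i q' →
        rhoHat i q = rhoHat i q' → q = q') ∧
     (∀ q', hSmem n k i q' → ∃ q, hSmem (n - 1) k i q ∧ rhoHat i q = q')) ∧
    (∀ n₁ n₂ : ℕ, 2 * k + 1 ≤ n₁ → 2 * k + 1 ≤ n₂ →
      {q | hSmem n₁ k i q}.ncard = {q | hSmem n₂ k i q}.ncard) := by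
  have step : ∀ n', 2 * k + 1 < n' →
      {q | hSmem n' k i q}.ncard = {q | hSmem (n' - 1) k i q}.ncard := by
    intro n' hn'
    have himg : rhoHat i '' {q | hSmem (n' - 1) k i q} = {q | hSmem n' k i q} := by
      ext q'
      constructor
      · rintro ⟨q, hq, rfl⟩
        exact rhoHat_maps n' k i hn' q hq
      · intro hq'
        obtain ⟨q, hq, hq2⟩ := rhoHat_surj n' k i hn' q' hq'
        exact ⟨q, hq, hq2⟩
    rw [← himg, Set.ncard_image_of_injective _ (rhoHat_inj i)]
  have key : ∀ N, 2 * k + 1 ≤ N →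
      {q | hSmem N k i q}.ncard = {q | hSmem (2 * k + 1) k i q}.ncard := by
    intro N hN
    induction N, hN using Nat.le_induction with
    | base => rfl
    | succ N hN ih =>
        have h := step (N + 1) (by omega)
        exact h.trans ih
  exact ⟨⟨rhoHat_maps n k i hn, fun q q' _ _ h => rhoHat_inj i h, rhoHat_surj n k i hn⟩,
    fun n₁ n₂ h₁ h₂ => (key n₁ h₁).trans (key n₂ h₂).symm⟩
end

section
/- For n ≥ 2k+1, 1 ≤ i ≤ k, and 1 ≤ j ≤ k, the cardinality of Ŝ_{i,j}^{(n,k)} equals Σ (m_2 - m_1)(m_3 - m_2)⋯(k+1 - m_i), where the sum is over all 1 ≤ m_1 < m_2 < ⋯ < m_i ≤ k with j ∈ {m_1,...,m_i}. -/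
open scoped Classical in
/-- `σ_{i,j}^{(k)} = Σ (m_2-m_1)(m_3-m_2)⋯(k+1-m_i)`, the sum being over all strictly
increasing `i`-tuples `1 ≤ m_1 < ⋯ < m_i ≤ k` with `j ∈ {m_1,…,m_i}` (here tuples are
encoded as strictly increasing `f : Fin i → Fin k`, with 1-based values `(f a).1 + 1`). -/
noncomputable def sig (k i j : ℕ) : ℕ :=
  ∑ f ∈ Finset.univ.filter (fun f : Fin i → Fin k =>
      (∀ a b : Fin i, a < b → f a < f b) ∧ ∃ a, (f a).1 + 1 = j),
    ∏ a : Fin i,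
      ((if h : a.1 + 1 < i then (f ⟨a.1 + 1, h⟩).1 + 1 else k + 1) - ((f a).1 + 1))


section Aux

private lemma strictMono_aux {N : ℕ} {f : Fin N → ℕ}
    (h : ∀ a : ℕ, ∀ ha : a + 1 < N, f ⟨a, by omega⟩ < f ⟨a + 1, ha⟩) :
    StrictMono f := by
  have key : ∀ b (hb : b < N) a (ha : a < N), a < b → f ⟨a, ha⟩ < f ⟨b, hb⟩ := by
    intro b
    induction b with
    | zero => intro _ _ _ hab; omega
    | succ b ih =>
      intro hb a ha hab
      rcases Nat.lt_succ_iff_lt_or_eq.mp hab with h' | h'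
      · exact (ih (by omega) a ha h').trans (h b hb)
      · subst h'; exact h a hb
  intro a b hab
  exact key b.1 b.isLt a.1 a.isLt hab

/-- The factor `(m_{s+1} - m_s)` resp. `(k+1 - m_i)`. -/
def cf (k i : ℕ) (f : Fin i → Fin k) (a : Fin i) : ℕ :=
  (if h : a.1 + 1 < i then (f ⟨a.1 + 1, h⟩).1 + 1 else k + 1) - ((f a).1 + 1)

lemma cf_lt₁ {k i : ℕ} {f : Fin i → Fin k} (g : ∀ a : Fin i, Fin (cf k i f a))
    (a : Fin i) (h : a.1 + 1 < i) : (f a).1 + (g a).1 < (f ⟨a.1 + 1, h⟩).1 := by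
  have hg := (g a).isLt
  unfold cf at hg
  split at hg
  · omega
  · omega

lemma cf_lt₂ {k i : ℕ} {f : Fin i → Fin k} (g : ∀ a : Fin i, Fin (cf k i f a))
    (a : Fin i) : (f a).1 + (g a).1 < k := by
  have hg := (g a).isLt
  unfold cf at hg
  split at hg
  next h =>
    have := (f ⟨a.1 + 1, h⟩).isLt
    omega
  next h =>
    have := (f a).isLt
    omega

lemma cf_lt₁' {k i : ℕ} {f : Fin i → Fin k} (g : ∀ a : Fin i, Fin (cf k i f a))
    (s s' : ℕ) (hs : s < i) (hs' : s' < i) (h : s' = s + 1) :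
    (f ⟨s, hs⟩).1 + (g ⟨s, hs⟩).1 < (f ⟨s', hs'⟩).1 := by
  subst h; exact cf_lt₁ g ⟨s, hs⟩ hs'

lemma fval_congr {i k : ℕ} (f : Fin i → Fin k) (s s' : ℕ) (hs : s < i) (hs' : s' < i)
    (h : s = s') : (f ⟨s, hs⟩).1 = (f ⟨s', hs'⟩).1 := by subst h; rfl

lemma gval_congr {i k : ℕ} {f : Fin i → Fin k} (g : ∀ a : Fin i, Fin (cf k i f a))
    (s s' : ℕ) (hs : s < i) (hs' : s' < i) (h : s = s') :
    (g ⟨s, hs⟩).1 = (g ⟨s', hs'⟩).1 := by subst h; rfl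

/-- The parametrization map. -/
def psi (i d : ℕ) {k : ℕ} (f : Fin i → Fin k)
    (g : ∀ a : Fin i, Fin (cf k i f a)) : Fin (2 * i) → ℕ :=
  fun b => if h : b.1 < i then (f ⟨b.1, h⟩).1 + 1
    else (f ⟨b.1 - i, by have := b.isLt; omega⟩).1 + 1 + d +
      (g ⟨b.1 - i, by have := b.isLt; omega⟩).1

lemma psi_lt {i d k : ℕ} {f : Fin i → Fin k} {g : ∀ a : Fin i, Fin (cf k i f a)}
    (b : ℕ) (hb : b < 2 * i) (h : b < i) :
    psi i d f g ⟨b, hb⟩ = (f ⟨b, h⟩).1 + 1 := dif_pos h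

lemma psi_ge {i d k : ℕ} {f : Fin i → Fin k} {g : ∀ a : Fin i, Fin (cf k i f a)}
    (b : ℕ) (hb : b < 2 * i) (h : ¬ b < i) :
    psi i d f g ⟨b, hb⟩ = (f ⟨b - i, by omega⟩).1 + 1 + d + (g ⟨b - i, by omega⟩).1 :=
  dif_neg h

/-- The middle-completion of `psi i d f g`. -/
def mkm (i d : ℕ) {k : ℕ} (f : Fin i → Fin k)
    (g : ∀ a : Fin i, Fin (cf k i f a)) : Fin (2 * i + 1) → ℕ :=
  fun a =>
    if h1 : a.1 < i then (f ⟨a.1, h1⟩).1 + 1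
    else if h2 : i < a.1 then
      (f ⟨a.1 - i - 1, by have := a.isLt; omega⟩).1 + 1 + d +
        (g ⟨a.1 - i - 1, by have := a.isLt; omega⟩).1
    else if h0 : 0 < i then (f ⟨0, h0⟩).1 + d else 0

lemma mkm_lt {i d k : ℕ} {f : Fin i → Fin k} {g : ∀ a : Fin i, Fin (cf k i f a)}
    (a : ℕ) (ha : a < 2 * i + 1) (h : a < i) :
    mkm i d f g ⟨a, ha⟩ = (f ⟨a, h⟩).1 + 1 := dif_pos h

lemma mkm_mid {i d k : ℕ} {f : Fin i → Fin k} {g : ∀ a : Fin i, Fin (cf k i f a)}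
    (a : ℕ) (ha : a < 2 * i + 1) (h : a = i) (h0 : 0 < i) :
    mkm i d f g ⟨a, ha⟩ = (f ⟨0, h0⟩).1 + d := by
  have e : mkm i d f g ⟨a, ha⟩ =
      if h1 : a < i then (f ⟨a, h1⟩).1 + 1
      else if h2 : i < a then
        (f ⟨a - i - 1, by omega⟩).1 + 1 + d + (g ⟨a - i - 1, by omega⟩).1
      else if h0 : 0 < i then (f ⟨0, h0⟩).1 + d else 0 := rfl
  rw [e, dif_neg (by omega), dif_neg (by omega), dif_pos h0]

lemma mkm_gt {i d k : ℕ} {f : Fin i → Fin k} {g : ∀ a : Fin i, Fin (cf k i f a)}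
    (a : ℕ) (ha : a < 2 * i + 1) (h : i < a) :
    mkm i d f g ⟨a, ha⟩ =
      (f ⟨a - i - 1, by omega⟩).1 + 1 + d + (g ⟨a - i - 1, by omega⟩).1 := by
  have e : mkm i d f g ⟨a, ha⟩ =
      if h1 : a < i then (f ⟨a, h1⟩).1 + 1
      else if h2 : i < a then
        (f ⟨a - i - 1, by omega⟩).1 + 1 + d + (g ⟨a - i - 1, by omega⟩).1
      else if h0 : 0 < i then (f ⟨0, h0⟩).1 + d else 0 := rfl
  rw [e, dif_neg (by omega), dif_pos h]

lemma delMid_lt {i : ℕ} (m : Fin (2 * i + 1) → ℕ) (b : ℕ) (hb : b < 2 * i) (h : b < i) :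
    delMid i m ⟨b, hb⟩ = m ⟨b, by omega⟩ := dif_pos h

lemma delMid_ge {i : ℕ} (m : Fin (2 * i + 1) → ℕ) (b : ℕ) (hb : b < 2 * i) (h : ¬ b < i) :
    delMid i m ⟨b, hb⟩ = m ⟨b + 1, by omega⟩ := dif_neg h

end Aux

lemma cf_eq₁ {k i : ℕ} (f : Fin i → Fin k) (t : ℕ) (ht : t < i) (h : t + 1 < i) :
    cf k i f ⟨t, ht⟩ = (f ⟨t + 1, h⟩).1 + 1 - ((f ⟨t, ht⟩).1 + 1) := by
  show (if h : t + 1 < i then (f ⟨t + 1, h⟩).1 + 1 else k + 1) - ((f ⟨t, ht⟩).1 + 1) = _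
  rw [dif_pos h]

lemma cf_eq₂ {k i : ℕ} (f : Fin i → Fin k) (t : ℕ) (ht : t < i) (h : ¬ t + 1 < i) :
    cf k i f ⟨t, ht⟩ = k + 1 - ((f ⟨t, ht⟩).1 + 1) := by
  show (if h : t + 1 < i then (f ⟨t + 1, h⟩).1 + 1 else k + 1) - ((f ⟨t, ht⟩).1 + 1) = _
  rw [dif_neg h]

def Pred (k i j : ℕ) (f : Fin i → Fin k) : Prop :=
  (∀ a b : Fin i, a < b → f a < f b) ∧ ∃ a, (f a).1 + 1 = j

lemma psi_mem {n k i j : ℕ} (hn : 2 * k + 1 ≤ n) (hi : 1 ≤ i)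
    {f : Fin i → Fin k} (hP : Pred k i j f)
    (g : ∀ a : Fin i, Fin (cf k i f a)) :
    hSmem n k i (psi i (n - k) f g) ∧
      ∃ b : Fin (2 * i), b.1 < i ∧ psi i (n - k) f g b = j := by
  obtain ⟨hf, hj⟩ := hP
  have h0 : 0 < i := hi
  have hfk : ∀ (s : ℕ) (hs : s < i), (f ⟨s, hs⟩).1 < k := fun s hs => (f ⟨s, hs⟩).isLt
  have hfm : ∀ (s t : ℕ) (hs : s < i) (ht : t < i), s < t →
      (f ⟨s, hs⟩).1 < (f ⟨t, ht⟩).1 :=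
    fun s t hs ht hst => hf ⟨s, hs⟩ ⟨t, ht⟩ (Fin.mk_lt_mk.mpr hst)
  have hg1 : ∀ (s : ℕ) (hs : s + 1 < i),
      (f ⟨s, by omega⟩).1 + (g ⟨s, by omega⟩).1 < (f ⟨s + 1, hs⟩).1 :=
    fun s hs => cf_lt₁ g ⟨s, by omega⟩ hs
  have hg2 : ∀ (s : ℕ) (hs : s < i), (f ⟨s, hs⟩).1 + (g ⟨s, hs⟩).1 < k :=
    fun s hs => cf_lt₂ g ⟨s, hs⟩
  constructor
  · refine ⟨mkm i (n - k) f g, ⟨?_, ?_, ?_, ?_⟩, ?_⟩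
    · -- StrictMono
      apply strictMono_aux
      intro a ha
      rcases lt_trichotomy (a + 1) i with h1 | h1 | h1
      · rw [mkm_lt a (by omega) (by omega), mkm_lt (a + 1) ha h1]
        have := hfm a (a + 1) (by omega) h1 (by omega)
        omega
      · rw [mkm_lt a (by omega) (by omega), mkm_mid (a + 1) ha h1 h0]
        have := hfk a (by omega)
        omega
      · by_cases h2 : a = i
        · rw [mkm_mid a (by omega) h2 h0, mkm_gt (a + 1) ha (by omega)]
          have := fval_congr f 0 (a + 1 - i - 1) h0 (by omega) (by omega)
          omega
        · rw [mkm_gt a (by omega) (by omega), mkm_gt (a + 1) ha (by omega)]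
          have := cf_lt₁' g (a - i - 1) (a + 1 - i - 1) (by omega) (by omega) (by omega)
          omega
    · -- bounds
      rintro ⟨a, ha⟩
      rcases lt_trichotomy a i with h1 | h1 | h1
      · rw [mkm_lt a ha h1]
        have := hfk a h1
        omega
      · rw [mkm_mid a ha h1 h0]
        have := hfk 0 h0
        omega
      · rw [mkm_gt a ha h1]
        have := hg2 (a - i - 1) (by omega)
        omega
    · -- main constraints
      rintro ⟨t, ht⟩
      constructor
      · show mkm i (n - k) f g ⟨i + t, by omega⟩ <
            mkm i (n - k) f g ⟨t, by omega⟩ + (n - k)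
        rcases Nat.eq_zero_or_pos t with h1 | h1
        · subst h1
          rw [mkm_mid (i + 0) (by omega) (by omega) h0, mkm_lt 0 (by omega) h0]
          omega
        · rw [mkm_gt (i + t) (by omega) (by omega), mkm_lt t (by omega) ht]
          have h2 := cf_lt₁' g (i + t - i - 1) t (by omega) ht (by omega)
          omega
      · show mkm i (n - k) f g ⟨t, by omega⟩ + (n - k) ≤
            mkm i (n - k) f g ⟨i + t + 1, by omega⟩
        rw [mkm_lt t (by omega) ht, mkm_gt (i + t + 1) (by omega) (by omega)]
        have := fval_congr f t (i + t + 1 - i - 1) ht (by omega) (by omega)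
        omega
    · -- last constraint
      show mkm i (n - k) f g ⟨2 * i, by omega⟩ <
          mkm i (n - k) f g ⟨i, by omega⟩ + (n - k)
      rw [mkm_gt (2 * i) (by omega) (by omega), mkm_mid i (by omega) rfl h0]
      have := hg2 (2 * i - i - 1) (by omega)
      omega
    · -- q = delMid
      funext b
      obtain ⟨b, hb⟩ := b
      by_cases h : b < i
      · rw [psi_lt b hb h, delMid_lt _ b hb h, mkm_lt b (by omega) h]
      · rw [psi_ge b hb h, delMid_ge _ b hb h, mkm_gt (b + 1) (by omega) (by omega)]
        have h1 := fval_congr f (b - i) (b + 1 - i - 1) (by omega) (by omega) (by omega)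
        have h2 := gval_congr g (b - i) (b + 1 - i - 1) (by omega) (by omega) (by omega)
        omega
  · obtain ⟨a, haj⟩ := hj
    refine ⟨⟨a.1, by have := a.isLt; omega⟩, a.isLt, ?_⟩
    rw [psi_lt a.1 (by have := a.isLt; omega) a.isLt]
    exact haj

lemma psi_surj {n k i j : ℕ} (hn : 2 * k + 1 ≤ n) (hi : 1 ≤ i)
    {q : Fin (2 * i) → ℕ} (hq : hSmem n k i q)
    (hqj : ∃ b : Fin (2 * i), b.1 < i ∧ q b = j) :
    ∃ (f : Fin i → Fin k) (_ : Pred k i j f)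
      (g : ∀ a : Fin i, Fin (cf k i f a)), psi i (n - k) f g = q := by
  obtain ⟨m, ⟨hmono, hbd, hcon, hlast⟩, hqm⟩ := hq
  subst hqm
  have hbd' : ∀ (a : ℕ) (ha : a < 2 * i + 1), 1 ≤ m ⟨a, ha⟩ ∧ m ⟨a, ha⟩ ≤ n :=
    fun a ha => hbd ⟨a, ha⟩
  have hcon1 : ∀ (t : ℕ) (ht : t < i),
      m ⟨i + t, by omega⟩ < m ⟨t, by omega⟩ + (n - k) := fun t ht => (hcon ⟨t, ht⟩).1
  have hcon1' : ∀ (t : ℕ) (ht : t + 1 < i),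
      m ⟨i + t + 1, by omega⟩ < m ⟨t + 1, by omega⟩ + (n - k) :=
    fun t ht => hcon1 (t + 1) ht
  have hcon2 : ∀ (t : ℕ) (ht : t < i),
      m ⟨t, by omega⟩ + (n - k) ≤ m ⟨i + t + 1, by omega⟩ := fun t ht => (hcon ⟨t, ht⟩).2
  have hmono' : ∀ (s t : ℕ) (hs : s < 2 * i + 1) (ht : t < 2 * i + 1), s < t →
      m ⟨s, hs⟩ < m ⟨t, ht⟩ :=
    fun s t hs ht hst => hmono (show (⟨s, hs⟩ : Fin (2 * i + 1)) < ⟨t, ht⟩ from hst)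
  have hmk : ∀ (t : ℕ) (ht : t < i), 1 ≤ m ⟨t, by omega⟩ ∧ m ⟨t, by omega⟩ ≤ k := by
    intro t ht
    have h1 := hcon2 t ht
    have h2 := (hbd' (i + t + 1) (by omega)).2
    have h3 := (hbd' t (by omega)).1
    omega
  set f : Fin i → Fin k := fun a =>
    ⟨m ⟨a.1, by have := a.isLt; omega⟩ - 1, by have := hmk a.1 a.isLt; omega⟩ with hfdef
  have hfval : ∀ (t : ℕ) (ht : t < i), (f ⟨t, ht⟩).1 = m ⟨t, by omega⟩ - 1 :=
    fun t ht => rfl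
  have hgbound : ∀ (t : ℕ) (ht : t < i),
      m ⟨i + t + 1, by omega⟩ - (m ⟨t, by omega⟩ + (n - k)) < cf k i f ⟨t, ht⟩ := by
    intro t ht
    by_cases h : t + 1 < i
    · rw [cf_eq₁ f t ht h]
      have h1 := hcon1' t h
      have h2 := hcon2 t ht
      have h3 := hmk t ht
      have h4 := hmk (t + 1) h
      have h5 := hmono' t (t + 1) (by omega) (by omega) (by omega)
      have h6 := hfval (t + 1) h
      have h7 := hfval t ht
      omega
    · rw [cf_eq₂ f t ht h]
      have h2 := hcon2 t ht
      have h3 := hmk t ht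
      have h6 := (hbd' (i + t + 1) (by omega)).2
      have h7 := hfval t ht
      omega
  refine ⟨f, ⟨?_, ?_⟩, fun a =>
    ⟨m ⟨i + a.1 + 1, by have := a.isLt; omega⟩ -
        (m ⟨a.1, by have := a.isLt; omega⟩ + (n - k)),
      hgbound a.1 a.isLt⟩, ?_⟩
  · intro a b hab
    obtain ⟨s, hs⟩ := a
    obtain ⟨t, ht⟩ := b
    have hab' : s < t := hab
    rw [Fin.lt_def]
    have h1 := hfval s hs
    have h2 := hfval t ht
    have h3 := hmono' s t (by omega) (by omega) hab'
    have h4 := hmk s hs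
    omega
  · obtain ⟨b0, hb0i, hb0j⟩ := hqj
    refine ⟨⟨b0.1, hb0i⟩, ?_⟩
    have h1 := hfval b0.1 hb0i
    have h2 := delMid_lt m b0.1 b0.isLt hb0i
    have h3 : delMid i m ⟨b0.1, b0.isLt⟩ = j := hb0j
    have h4 := hmk b0.1 hb0i
    omega
  · funext b
    obtain ⟨b, hb⟩ := b
    by_cases h : b < i
    · rw [psi_lt b hb h, delMid_lt m b hb h]
      have h1 := hfval b h
      have h2 := hmk b h
      omega
    · rw [psi_ge b hb h, delMid_ge m b hb h]
      show (f ⟨b - i, by omega⟩).1 + 1 + (n - k) +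
          (m ⟨i + (b - i) + 1, by omega⟩ - (m ⟨b - i, by omega⟩ + (n - k))) =
          m ⟨b + 1, by omega⟩
      have h1 := hfval (b - i) (by omega)
      have h2 := hcon2 (b - i) (by omega)
      have h3 := hmk (b - i) (by omega)
      simp only [show i + (b - i) + 1 = b + 1 from by omega] at h2 ⊢
      omega


/-- for `n ≥ 2k+1`, `1 ≤ i ≤ k`, `1 ≤ j ≤ k`, the cardinality of
`Ŝ_{i,j}^{(n,k)}` (elements of `Ŝ_i^{(n,k)}` whose first `i` entries contain `j`) equals
`Σ (m_2-m_1)(m_3-m_2)⋯(k+1-m_i)` over increasing tuples in `{1,…,k}` containing `j`. -/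
theorem card_hS_eq_sig (n k i j : ℕ) (hn : 2 * k + 1 ≤ n)
    (hi : 1 ≤ i) (hik : i ≤ k) (hj : 1 ≤ j) (hjk : j ≤ k) :
    {q : Fin (2 * i) → ℕ | hSmem n k i q ∧ ∃ b : Fin (2 * i), b.1 < i ∧ q b = j}.ncard
      = sig k i j := by
  classical
  set Q : Set (Fin (2 * i) → ℕ) :=
    {q | hSmem n k i q ∧ ∃ b : Fin (2 * i), b.1 < i ∧ q b = j} with hQdef
  have Φmem : ∀ x : (f : {f : Fin i → Fin k // Pred k i j f}) ×
      (∀ a : Fin i, Fin (cf k i f.1 a)), psi i (n - k) x.1.1 x.2 ∈ Q :=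
    fun x => psi_mem hn hi x.1.2 x.2
  have key : Nat.card ((f : {f : Fin i → Fin k // Pred k i j f}) ×
      (∀ a : Fin i, Fin (cf k i f.1 a))) = Nat.card Q := by
    apply Nat.card_eq_of_bijective (fun x => (⟨psi i (n - k) x.1.1 x.2, Φmem x⟩ : Q))
    constructor
    · rintro ⟨⟨f, hf⟩, g⟩ ⟨⟨f', hf'⟩, g'⟩ hxy
      have h1 : psi i (n - k) f g = psi i (n - k) f' g' := congrArg Subtype.val hxy
      have hff : f = f' := by
        funext a
        obtain ⟨t, ht⟩ := a
        have h2 := congrFun h1 ⟨t, by omega⟩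
        have e3 : psi i (n - k) f g ⟨t, by omega⟩ = (f ⟨t, ht⟩).1 + 1 :=
          psi_lt t (by omega) ht
        have e4 : psi i (n - k) f' g' ⟨t, by omega⟩ = (f' ⟨t, ht⟩).1 + 1 :=
          psi_lt t (by omega) ht
        exact Fin.ext (by omega)
      subst hff
      have hgg : g = g' := by
        funext a
        obtain ⟨t, ht⟩ := a
        have h2 := congrFun h1 ⟨i + t, by omega⟩
        have e3 : psi i (n - k) f g ⟨i + t, by omega⟩ =
            (f ⟨i + t - i, by omega⟩).1 + 1 + (n - k) + (g ⟨i + t - i, by omega⟩).1 :=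
          psi_ge (i + t) (by omega) (by omega)
        have e4 : psi i (n - k) f g' ⟨i + t, by omega⟩ =
            (f ⟨i + t - i, by omega⟩).1 + 1 + (n - k) + (g' ⟨i + t - i, by omega⟩).1 :=
          psi_ge (i + t) (by omega) (by omega)
        have e1 := gval_congr g (i + t - i) t (by omega) ht (by omega)
        have e2 := gval_congr g' (i + t - i) t (by omega) ht (by omega)
        exact Fin.ext (by omega)
      subst hgg
      rfl
    · rintro ⟨q, hq1, hq2⟩
      obtain ⟨f, hf, g, hfg⟩ := psi_surj hn hi hq1 hq2
      exact ⟨⟨⟨f, hf⟩, g⟩, Subtype.ext hfg⟩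
  have hsig : sig k i j =
      ∑ f : {f : Fin i → Fin k // Pred k i j f}, ∏ a : Fin i, cf k i f.1 a := by
    unfold sig
    exact Finset.sum_subtype _ (fun x => by simp [Pred]) _
  rw [← Nat.card_coe_set_eq, ← key, Nat.card_eq_fintype_card, Fintype.card_sigma]
  simp only [Fintype.card_pi, Fintype.card_fin]
  rw [hsig]
end

section
/- The numbers σ_{i,j}^{(k)} := #Ŝ_{i,j}^{(2k+1,k)} satisfy, for k ≥ i ≥ 2: σ_{i,1}^{(k)} = σ_{i-1,1}^{(k-1)} + 2σ_{i-1,1}^{(k-2)} + ⋯ + (k - i + 1)σ_{i-1,1}^{(i-1)}, i.e., σ_{i,1}^{(k)} = Σ_{ℓ=i}^{k} (k+1-ℓ) σ_{i-1,1}^{(ℓ-1)}. -/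
/-- auxiliary: split a long tuple into (last value + 1, initial part). -/
def sigG (n k : ℕ) (f : Fin (n+2) → Fin k) : (ℓ : ℕ) × (Fin (n+1) → Fin (ℓ-1)) :=
  ⟨max ((f (Fin.last (n+1)) : ℕ) + 1) (n+2),
   fun a => ⟨min ((f (Fin.castSucc a)) : ℕ)
      (max ((f (Fin.last (n+1)) : ℕ) + 1) (n+2) - 2), by omega⟩⟩

/-- auxiliary: glue (ℓ, short tuple) into a long tuple. -/
def sigF (n k : ℕ) (hk : 1 ≤ k) (p : (ℓ : ℕ) × (Fin (n+1) → Fin (ℓ-1)))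
    (a : Fin (n+2)) : Fin k :=
  ⟨min (if h : (a : ℕ) < n+1 then ((p.2 ⟨a, h⟩ : Fin (p.1 - 1)) : ℕ) else p.1 - 1) (k-1),
    by omega⟩

lemma sigF_val (n k : ℕ) (hk : 1 ≤ k) (p : (ℓ : ℕ) × (Fin (n+1) → Fin (ℓ-1)))
    (h1 : n + 2 ≤ p.1) (h2 : p.1 ≤ k) (a : Fin (n+2)) :
    (sigF n k hk p a : ℕ) = if h : (a : ℕ) < n+1 then (p.2 ⟨a, h⟩ : ℕ) else p.1 - 1 := by
  unfold sigF
  dsimp only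
  split
  · have := (p.2 ⟨a, by assumption⟩).2
    omega
  · omega

lemma sigG_fst (n k : ℕ) (f : Fin (n+2) → Fin k)
    (h : n + 1 ≤ (f (Fin.last (n+1)) : ℕ)) :
    (sigG n k f).1 = (f (Fin.last (n+1)) : ℕ) + 1 := by
  unfold sigG; dsimp only; omega

lemma sigG_snd_val (n k : ℕ) (f : Fin (n+2) → Fin k)
    (h : n + 1 ≤ (f (Fin.last (n+1)) : ℕ))
    (b : Fin (n+1)) (hb : (f (Fin.castSucc b) : ℕ) < (f (Fin.last (n+1)) : ℕ)) :
    ((sigG n k f).2 b : ℕ) = (f (Fin.castSucc b) : ℕ) := by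
  unfold sigG; dsimp only; omega

lemma sig_sigma_ext {n : ℕ} (p q : (ℓ : ℕ) × (Fin (n+1) → Fin (ℓ-1)))
    (h1 : p.1 = q.1) (h2 : ∀ b, (p.2 b : ℕ) = (q.2 b : ℕ)) : p = q := by
  obtain ⟨pl, pf⟩ := p
  obtain ⟨ql, qf⟩ := q
  dsimp only at h1
  subst h1
  have : pf = qf := funext fun b => Fin.ext (h2 b)
  rw [this]

/-- for `k ≥ i ≥ 2`,
`σ_{i,1}^{(k)} = Σ_{ℓ=i}^{k} (k+1-ℓ) σ_{i-1,1}^{(ℓ-1)}`. -/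
theorem sig_recurrence (k i : ℕ) (hi : 2 ≤ i) (hik : i ≤ k) :
    sig k i 1 = ∑ ℓ ∈ Finset.Icc i k, (k + 1 - ℓ) * sig (ℓ - 1) (i - 1) 1 := by
  classical
  obtain ⟨n, rfl⟩ : ∃ n, i = n + 2 := ⟨i - 2, by omega⟩
  have hk : n + 2 ≤ k := hik
  have hk1 : 1 ≤ k := by omega
  have le_apply : ∀ {m : ℕ} (f : Fin (n+2) → Fin m),
      (∀ a b : Fin (n+2), a < b → f a < f b) →
      ∀ (j : ℕ) (hj : j < n + 2), j ≤ (f ⟨j, hj⟩ : ℕ) := by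
    intro m f hf j
    induction j with
    | zero => intro hj; exact Nat.zero_le _
    | succ j ih =>
      intro hj
      have h1 := ih (by omega)
      have h2 : f ⟨j, by omega⟩ < f ⟨j+1, hj⟩ := hf _ _ (by simp [Fin.lt_def])
      rw [Fin.lt_def] at h2
      omega
  simp only [show n + 2 - 1 = n + 1 from rfl]
  unfold sig
  simp only [Finset.mul_sum]
  rw [Finset.sum_sigma']
  refine (Finset.sum_nbij' (sigF n k hk1) (sigG n k) ?_ ?_ ?_ ?_ ?_).symm
  · -- sigF maps into S
    rintro ⟨ℓ, g⟩ hp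
    simp only [Finset.mem_sigma, Finset.mem_Icc, Finset.mem_filter, Finset.mem_univ,
      true_and] at hp ⊢
    obtain ⟨⟨h1, h2⟩, hg, hg0⟩ := hp
    constructor
    · intro a b hab
      rw [Fin.lt_def, sigF_val n k hk1 ⟨ℓ, g⟩ h1 h2, sigF_val n k hk1 ⟨ℓ, g⟩ h1 h2]
      rw [Fin.lt_def] at hab
      split
      · split
        · exact hg _ _ (by rw [Fin.lt_def]; exact hab)
        · have := (g ⟨(a : ℕ), by assumption⟩).2
          omega
      · omega
    · refine ⟨0, ?_⟩
      obtain ⟨a, ha⟩ := hg0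
      rw [sigF_val n k hk1 ⟨ℓ, g⟩ h1 h2]
      dsimp only
      rw [dif_pos (show ((0 : Fin (n+2)) : ℕ) < n + 1 by simp)]
      have h0a : (g ⟨((0 : Fin (n+2)) : ℕ), by simp⟩ : ℕ) ≤ (g a : ℕ) := by
        rcases eq_or_lt_of_le (Fin.zero_le a) with h | h
        · have : (⟨((0 : Fin (n+2)) : ℕ), by simp⟩ : Fin (n+1)) = a := by
            rw [← h]; rfl
          rw [this]
        · have : (⟨((0 : Fin (n+2)) : ℕ), by simp⟩ : Fin (n+1)) = 0 := rfl
          rw [this]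
          exact le_of_lt (hg _ _ h)
      omega
  · -- sigG maps into sigma
    intro f hf
    simp only [Finset.mem_filter, Finset.mem_univ, true_and] at hf
    obtain ⟨hmono, a, ha⟩ := hf
    have hlast : n + 1 ≤ (f (Fin.last (n+1)) : ℕ) := le_apply f hmono (n+1) (by omega)
    have hlastk : (f (Fin.last (n+1)) : ℕ) < k := (f _).2
    have hcast : ∀ b : Fin (n+1), (f (Fin.castSucc b) : ℕ) < (f (Fin.last (n+1)) : ℕ) :=
      fun b => hmono _ _ (Fin.castSucc_lt_last b)
    simp only [Finset.mem_sigma, Finset.mem_Icc, Finset.mem_filter, Finset.mem_univ, true_and]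
    refine ⟨⟨?_, ?_⟩, ?_, ?_⟩
    · rw [sigG_fst n k f hlast]; omega
    · rw [sigG_fst n k f hlast]; omega
    · intro a b hab
      rw [Fin.lt_def, sigG_snd_val n k f hlast a (hcast a), sigG_snd_val n k f hlast b (hcast b)]
      exact hmono _ _ (Fin.castSucc_lt_castSucc_iff.mpr hab)
    · have hfa : (f a : ℕ) = 0 := by omega
      have hf0 : (f 0 : ℕ) = 0 := by
        rcases eq_or_lt_of_le (Fin.zero_le a) with h | h
        · rw [h]; exact hfa
        · have := hmono _ _ h; rw [Fin.lt_def] at this; omega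
      refine ⟨0, ?_⟩
      rw [sigG_snd_val n k f hlast 0 (hcast 0)]
      have : Fin.castSucc (0 : Fin (n+1)) = (0 : Fin (n+2)) := rfl
      rw [this, hf0]
  · -- left inverse : sigG (sigF p) = p
    rintro ⟨ℓ, g⟩ hp
    simp only [Finset.mem_sigma, Finset.mem_Icc, Finset.mem_filter, Finset.mem_univ,
      true_and] at hp
    obtain ⟨⟨h1, h2⟩, hg, hg0⟩ := hp
    have hval := sigF_val n k hk1 ⟨ℓ, g⟩ h1 h2
    have hlastval : (sigF n k hk1 ⟨ℓ, g⟩ (Fin.last (n+1)) : ℕ) = ℓ - 1 := by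
      rw [hval]
      rw [dif_neg (by simp [Fin.last])]
    have hlastge : n + 1 ≤ (sigF n k hk1 ⟨ℓ, g⟩ (Fin.last (n+1)) : ℕ) := by
      rw [hlastval]; omega
    have hcastval : ∀ b : Fin (n+1),
        (sigF n k hk1 ⟨ℓ, g⟩ (Fin.castSucc b) : ℕ) = (g b : ℕ) := by
      intro b
      rw [hval]
      rw [dif_pos (show ((Fin.castSucc b : Fin (n+2)) : ℕ) < n + 1 by simp [b.2])]
      congr 1
    refine sig_sigma_ext _ _ ?_ ?_
    · rw [sigG_fst n k _ hlastge, hlastval]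
      dsimp only
      omega
    · intro b
      rw [sigG_snd_val n k _ hlastge b (by rw [hcastval, hlastval]; have := (g b).2; omega)]
      exact hcastval b
  · -- right inverse : sigF (sigG f) = f
    intro f hf
    simp only [Finset.mem_filter, Finset.mem_univ, true_and] at hf
    obtain ⟨hmono, a0, ha0⟩ := hf
    have hlast : n + 1 ≤ (f (Fin.last (n+1)) : ℕ) := le_apply f hmono (n+1) (by omega)
    have hlastk : (f (Fin.last (n+1)) : ℕ) < k := (f _).2
    have hcast : ∀ b : Fin (n+1), (f (Fin.castSucc b) : ℕ) < (f (Fin.last (n+1)) : ℕ) :=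
      fun b => hmono _ _ (Fin.castSucc_lt_last b)
    have hfst := sigG_fst n k f hlast
    have h1' : n + 2 ≤ (sigG n k f).1 := by rw [hfst]; omega
    have h2' : (sigG n k f).1 ≤ k := by rw [hfst]; omega
    funext a
    apply Fin.ext
    rw [sigF_val n k hk1 (sigG n k f) h1' h2']
    split
    · rename_i h
      rw [sigG_snd_val n k f hlast ⟨(a : ℕ), h⟩ (hcast _)]
      have : Fin.castSucc (⟨(a : ℕ), h⟩ : Fin (n+1)) = a := Fin.ext rfl
      rw [this]
    · rename_i h
      have ha : a = Fin.last (n+1) := Fin.ext (by have := a.2; simp [Fin.last]; omega)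
      rw [hfst, ha]
      omega
  · -- products agree
    rintro ⟨ℓ, g⟩ hp
    simp only [Finset.mem_sigma, Finset.mem_Icc, Finset.mem_filter, Finset.mem_univ,
      true_and] at hp
    obtain ⟨⟨h1, h2⟩, hg, hg0⟩ := hp
    have hval := sigF_val n k hk1 ⟨ℓ, g⟩ h1 h2
    have hlastval : (sigF n k hk1 ⟨ℓ, g⟩ (Fin.last (n+1)) : ℕ) = ℓ - 1 := by
      rw [hval]
      rw [dif_neg (by simp [Fin.last])]
    have hcastval : ∀ b : Fin (n+1),
        (sigF n k hk1 ⟨ℓ, g⟩ (Fin.castSucc b) : ℕ) = (g b : ℕ) := by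
      intro b
      rw [hval]
      rw [dif_pos (show ((Fin.castSucc b : Fin (n+2)) : ℕ) < n + 1 by simp [b.2])]
      congr 1
    conv_rhs => rw [Fin.prod_univ_castSucc]
    rw [mul_comm]
    congr 1
    · -- initial factors
      refine Finset.prod_congr rfl ?_
      intro b _
      have hb2 : ((Fin.castSucc b : Fin (n+2)) : ℕ) + 1 < n + 2 := by
        simp [b.2]
      rw [dif_pos hb2]
      have e1 : (sigF n k hk1 ⟨ℓ, g⟩ ⟨((Fin.castSucc b : Fin (n+2)) : ℕ) + 1, hb2⟩ : ℕ) =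
          if h : (b : ℕ) + 1 < n + 1 then (g ⟨(b : ℕ) + 1, h⟩ : ℕ) else ℓ - 1 := by
        rw [hval]
        simp only [Fin.coe_castSucc]
      rw [e1, hcastval]
      by_cases hb : (b : ℕ) + 1 < n + 1
      · rw [dif_pos hb, dif_pos hb]
      · rw [dif_neg hb, dif_neg hb]
    · -- last factor
      rw [dif_neg (by simp [Fin.last])]
      rw [hlastval]
      dsimp only
      omega
end

section
/- The numbers σ_{i,1}^{(k)} satisfy the closed formula σ_{i,1}^{(k)} = C(k+i-1, 2i-1) (binomial coefficient) for all 1 ≤ i ≤ k. -/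
lemma my_hockey (r m : ℕ) :
    ∑ t ∈ Finset.range (m + 1), (t + r).choose r = (m + r + 1).choose (r + 1) := by
  induction m with
  | zero => simp
  | succ m ih =>
      rw [Finset.sum_range_succ, ih]
      have e : m + 1 + r = m + r + 1 := by omega
      rw [e]
      have hp := Nat.choose_succ_succ (m + r + 1) r
      simp only [Nat.succ_eq_add_one] at hp
      omega

lemma my_idsum (j n : ℕ) :
    ∑ t ∈ Finset.range (n + 1), (n + 1 - t) * ((t + (2 * j + 1)).choose (2 * j + 1)) =
      (n + (2 * j + 3)).choose (2 * j + 3) := by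
  induction n with
  | zero => simp
  | succ n ih =>
      have step : ∀ t ∈ Finset.range (n + 2),
          (n + 2 - t) * ((t + (2 * j + 1)).choose (2 * j + 1)) =
          (n + 1 - t) * ((t + (2 * j + 1)).choose (2 * j + 1)) +
            (t + (2 * j + 1)).choose (2 * j + 1) := by
        intro t ht
        simp only [Finset.mem_range] at ht
        have : n + 2 - t = (n + 1 - t) + 1 := by omega
        rw [this, Nat.add_mul, Nat.one_mul]
      rw [Finset.sum_congr rfl step, Finset.sum_add_distrib]
      rw [Finset.sum_range_succ
        (f := fun t => (n + 1 - t) * ((t + (2 * j + 1)).choose (2 * j + 1)))]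
      simp only [Nat.sub_self, Nat.zero_mul, Nat.add_zero]
      rw [ih, my_hockey (2 * j + 1) (n + 1)]
      have hp := Nat.choose_succ_succ (n + (2 * j + 3)) (2 * j + 2)
      simp only [Nat.succ_eq_add_one] at hp
      have e1 : n + 1 + (2 * j + 1) + 1 = n + (2 * j + 3) := by omega
      have e2 : n + (2 * j + 3) + 1 = n + 1 + (2 * j + 3) := by omega
      have e3 : 2 * j + 2 + 1 = 2 * j + 3 := by omega
      rw [e2, e3] at hp
      have e4 : 2 * j + 1 + 1 = 2 * j + 2 := by omega
      rw [e1, e4]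
      omega

lemma my_mono_le {i k : ℕ} (f : Fin i → Fin k)
    (hf : ∀ a b : Fin i, a < b → f a < f b) :
    ∀ n (h : n < i), n ≤ (f ⟨n, h⟩).1 := by
  intro n
  induction n with
  | zero => intro h; exact Nat.zero_le _
  | succ n ihn =>
      intro h
      have h' : n < i := by omega
      have hlt : f ⟨n, h'⟩ < f ⟨n + 1, h⟩ := hf _ _ (by simp [Fin.lt_def])
      have := ihn h'
      rw [Fin.lt_def] at hlt
      omega

lemma my_apply_zero {i k : ℕ} (f : Fin i → Fin k)
    (hf : ∀ a b : Fin i, a < b → f a < f b) (hw : ∃ a, (f a).1 + 1 = 1)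
    (h0 : 0 < i) : (f ⟨0, h0⟩).1 = 0 := by
  obtain ⟨a, ha⟩ := hw
  have ha' : (f a).1 = 0 := by omega
  rcases Nat.eq_zero_or_pos a.1 with h | h
  · have : a = ⟨0, h0⟩ := Fin.ext h
    rw [← this]; exact ha'
  · have : f ⟨0, h0⟩ < f a := hf _ _ (by simp [Fin.lt_def, h])
    rw [Fin.lt_def] at this
    omega

open scoped Classical in
lemma my_sig_rec (i k : ℕ) (hi : 1 ≤ i) (hk : i + 1 ≤ k) :
    sig k (i + 1) 1 = ∑ ℓ ∈ Finset.Icc (i + 1) k, (k + 1 - ℓ) * sig (ℓ - 1) i 1 := by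
  conv_lhs => rw [sig]
  set S : Finset (Fin (i+1) → Fin k) := Finset.univ.filter (fun f : Fin (i+1) → Fin k =>
      (∀ a b : Fin (i+1), a < b → f a < f b) ∧ ∃ a, (f a).1 + 1 = 1) with hS
  set P : (Fin (i+1) → Fin k) → ℕ := fun f => ∏ a : Fin (i+1),
      ((if h : a.1 + 1 < i + 1 then (f ⟨a.1 + 1, h⟩).1 + 1 else k + 1) - ((f a).1 + 1)) with hP
  have hmap : ∀ f ∈ S, (f (Fin.last i)).1 + 1 ∈ Finset.Icc (i + 1) k := by
    intro f hf
    simp only [hS, Finset.mem_filter, Finset.mem_univ, true_and] at hf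
    obtain ⟨hmono, hwit⟩ := hf
    simp only [Finset.mem_Icc]
    have h1 := my_mono_le f hmono i (by omega)
    have he : (⟨i, by omega⟩ : Fin (i+1)) = Fin.last i := Fin.ext rfl
    rw [he] at h1
    have h2 := (f (Fin.last i)).2
    omega
  rw [← Finset.sum_fiberwise_of_maps_to hmap P]
  refine Finset.sum_congr rfl fun ℓ hℓ => ?_
  simp only [Finset.mem_Icc] at hℓ
  obtain ⟨hℓ1, hℓ2⟩ := hℓ
  rw [sig, Finset.mul_sum]
  refine Finset.sum_nbij'
    (i := fun f (a : Fin i) => (⟨min ((f a.castSucc).1) (ℓ - 2), by omega⟩ : Fin (ℓ - 1)))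
    (j := fun g (a : Fin (i+1)) => (⟨if h : a.1 < i then (g ⟨a.1, h⟩).1 else ℓ - 1, by
        split
        · exact lt_trans (g _).2 (by omega)
        · omega⟩ : Fin k))
    ?_ ?_ ?_ ?_ ?_
  · -- forward maps into target
    intro f hf
    simp only [Finset.mem_filter, Finset.mem_univ, true_and, hS] at hf
    obtain ⟨⟨hmono, hwit⟩, hlast⟩ := hf
    have hbound : ∀ a : Fin i, (f a.castSucc).1 < ℓ - 1 := by
      intro a
      have h := hmono _ _ (Fin.castSucc_lt_last a)
      rw [Fin.lt_def] at h
      omega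
    simp only [Finset.mem_filter, Finset.mem_univ, true_and]
    refine ⟨fun a b hab => ?_, ⟨⟨0, by omega⟩, ?_⟩⟩
    · have h := hmono _ _ (Fin.castSucc_lt_castSucc_iff.mpr hab)
      rw [Fin.lt_def] at h ⊢
      have hb1 := hbound a
      have hb2 := hbound b
      simp only
      omega
    · have h0 : (f ⟨0, by omega⟩).1 = 0 := my_apply_zero f hmono hwit (by omega)
      have he : (Fin.castSucc (⟨0, by omega⟩ : Fin i)) = (⟨0, by omega⟩ : Fin (i+1)) :=
        Fin.ext rfl
      simp only [he, h0]
      omega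
  · -- backward maps into source
    intro g hg
    simp only [Finset.mem_filter, Finset.mem_univ, true_and] at hg
    obtain ⟨hmono, hwit⟩ := hg
    simp only [Finset.mem_filter, Finset.mem_univ, true_and, hS]
    refine ⟨⟨fun a b hab => ?_, ⟨⟨0, by omega⟩, ?_⟩⟩, ?_⟩
    · rw [Fin.lt_def] at hab ⊢
      simp only
      by_cases hb : b.1 < i
      · have ha : a.1 < i := by omega
        rw [dif_pos ha, dif_pos hb]
        have h := hmono ⟨a.1, ha⟩ ⟨b.1, hb⟩ (by rw [Fin.lt_def]; exact hab)
        rw [Fin.lt_def] at h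
        exact h
      · have ha : a.1 < i := by omega
        rw [dif_pos ha, dif_neg hb]
        exact (g ⟨a.1, ha⟩).2
    · have h0 : (0:ℕ) < i := by omega
      simp only [dif_pos h0]
      have := my_apply_zero g hmono hwit h0
      omega
    · have hni : ¬ (Fin.last i).1 < i := by simp
      simp only [dif_neg hni]
      omega
  · -- left inverse
    intro f hf
    simp only [Finset.mem_filter, Finset.mem_univ, true_and, hS] at hf
    obtain ⟨⟨hmono, hwit⟩, hlast⟩ := hf
    have hbound : ∀ a : Fin i, (f a.castSucc).1 < ℓ - 1 := by
      intro a
      have h := hmono _ _ (Fin.castSucc_lt_last a)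
      rw [Fin.lt_def] at h
      omega
    funext a
    refine Fin.ext ?_
    simp only
    by_cases ha : a.1 < i
    · rw [dif_pos ha]
      have he : Fin.castSucc (⟨a.1, ha⟩ : Fin i) = a := Fin.ext rfl
      simp only [he]
      have := hbound ⟨a.1, ha⟩
      rw [he] at this
      omega
    · rw [dif_neg ha]
      have he : a = Fin.last i := Fin.ext (by have := a.2; simp only [Fin.val_last]; omega)
      rw [he]
      omega
  · -- right inverse
    intro g hg
    funext a
    refine Fin.ext ?_
    simp only
    have hc : (Fin.castSucc a).1 < i := a.2
    rw [dif_pos hc]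
    have he : (⟨(Fin.castSucc a).1, hc⟩ : Fin i) = a := Fin.ext rfl
    rw [he]
    have := (g a).2
    omega
  · -- values agree
    intro f hf
    simp only [Finset.mem_filter, Finset.mem_univ, true_and, hS] at hf
    obtain ⟨⟨hmono, hwit⟩, hlast⟩ := hf
    have hbound : ∀ a : Fin i, (f a.castSucc).1 < ℓ - 1 := by
      intro a
      have h := hmono _ _ (Fin.castSucc_lt_last a)
      rw [Fin.lt_def] at h
      omega
    rw [hP]
    simp only
    rw [Fin.prod_univ_castSucc]
    have hni : ¬ (Fin.last i).1 + 1 < i + 1 := by simp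
    rw [dif_neg hni]
    have hlt : k + 1 - ((f (Fin.last i)).1 + 1) = k + 1 - ℓ := by omega
    rw [hlt, Nat.mul_comm]
    congr 1
    refine Finset.prod_congr rfl fun a _ => ?_
    have ha1 : (Fin.castSucc a).1 + 1 < i + 1 := by
      have := a.2
      simp only [Fin.coe_castSucc]
      omega
    rw [dif_pos ha1]
    by_cases h2 : a.1 + 1 < i
    · rw [dif_pos h2]
      have he : (⟨(Fin.castSucc a).1 + 1, ha1⟩ : Fin (i+1)) =
          Fin.castSucc (⟨a.1 + 1, h2⟩ : Fin i) := Fin.ext rfl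
      rw [he]
      have hb1 := hbound ⟨a.1 + 1, h2⟩
      have hb2 := hbound a
      omega
    · rw [dif_neg h2]
      have he : (⟨(Fin.castSucc a).1 + 1, ha1⟩ : Fin (i+1)) = Fin.last i :=
        Fin.ext (by have := a.2; simp only [Fin.coe_castSucc, Fin.val_last]; omega)
      rw [he]
      have hb2 := hbound a
      omega

open scoped Classical in
lemma my_sig_one (k : ℕ) (hk : 1 ≤ k) : sig k 1 1 = k := by
  rw [sig]
  have hset : (Finset.univ.filter (fun f : Fin 1 → Fin k =>
      (∀ a b : Fin 1, a < b → f a < f b) ∧ ∃ a, (f a).1 + 1 = 1)) =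
      {fun _ => ⟨0, hk⟩} := by
    ext f
    simp only [Finset.mem_filter, Finset.mem_univ, true_and, Finset.mem_singleton]
    constructor
    · rintro ⟨-, a, ha⟩
      funext b
      have hab : a = b := Subsingleton.elim _ _
      subst hab
      exact Fin.ext (show (f a).1 = 0 by omega)
    · rintro rfl
      refine ⟨?_, ⟨0, by simp⟩⟩
      intro a b hab
      exact absurd hab (by simp [Subsingleton.elim a b])
  rw [hset, Finset.sum_singleton]
  simp

/-- `σ_{i,1}^{(k)} = C(k+i-1, 2i-1)` for `1 ≤ i ≤ k`. -/
theorem sig_closed_formula (k i : ℕ) (hi : 1 ≤ i) (hik : i ≤ k) :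
    sig k i 1 = Nat.choose (k + i - 1) (2 * i - 1) := by
  revert hi hik
  induction i generalizing k with
  | zero => omega
  | succ n ih =>
      intro hi hik
      rcases Nat.eq_zero_or_pos n with rfl | hn
      · rw [my_sig_one k hik]
        simp
      · rw [my_sig_rec n k hn hik]
        have hstep : ∀ ℓ ∈ Finset.Icc (n + 1) k,
            (k + 1 - ℓ) * sig (ℓ - 1) n 1 =
            (k + 1 - ℓ) * (ℓ - 1 + n - 1).choose (2 * n - 1) := by
          intro ℓ hℓ
          simp only [Finset.mem_Icc] at hℓ
          rw [ih (ℓ - 1) hn (by omega)]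
        rw [Finset.sum_congr rfl hstep]
        rw [← Finset.Ico_add_one_right_eq_Icc, Finset.sum_Ico_eq_sum_range]
        obtain ⟨j, rfl⟩ : ∃ j, n = j + 1 := ⟨n - 1, by omega⟩
        obtain ⟨N, hN⟩ : ∃ N, k = N + j + 2 := ⟨k - j - 2, by omega⟩
        subst hN
        have hrange : N + j + 2 + 1 - (j + 1 + 1) = N + 1 := by omega
        rw [hrange]
        have harg : ∀ t ∈ Finset.range (N + 1),
            (N + j + 2 + 1 - (j + 1 + 1 + t)) *
              ((j + 1 + 1 + t) - 1 + (j + 1) - 1).choose (2 * (j + 1) - 1) =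
            (N + 1 - t) * ((t + (2 * j + 1)).choose (2 * j + 1)) := by
          intro t ht
          simp only [Finset.mem_range] at ht
          have e1 : N + j + 2 + 1 - (j + 1 + 1 + t) = N + 1 - t := by omega
          have e2 : (j + 1 + 1 + t) - 1 + (j + 1) - 1 = t + (2 * j + 1) := by omega
          have e3 : 2 * (j + 1) - 1 = 2 * j + 1 := by omega
          rw [e1, e2, e3]
        rw [Finset.sum_congr rfl harg, my_idsum j N]
        congr 1 <;> omega
end

section
/- For 1 ≤ i ≤ k and 1 ≤ j < k, the difference σ_{i,j}^{(k)} - σ_{i,j+1}^{(k)} equals (1/(2i-2)!) · ∏_{s=1-i}^{i-2} (2j - k + s), where the empty product (case i = 1) is 1. In particular, σ_{i,j}^{(k)} ≥ σ_{i,j+1}^{(k)}, with equality if and only if ⌊(k-i+3)/2⌋ ≤ j < ⌊(k+i+1)/2⌋. -/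
/-!
The weight of a tuple ending in `m` is the weight of the rest of the tuple, read as a tuple in
`[1, m - 1]`, times `k + 1 - m`. Hence
`σ_{i+1,j}^{(k)} = C(j+i-1, 2i) (k+1-j) + ∑_{j < m ≤ k} σ_{i,j}^{(m-1)} (k+1-m)`,
where `C(t+p, 2p)` is the total weight of all `p`-tuples in `[1, t]`. Subtracting the same
identity for `j + 1`, the differences `σ_{i+1,j}^{(k)} - σ_{i+1,j+1}^{(k)}` satisfy a recursion
in `i`, which Pascal's rule and a twice summed hockey stick for the binomial polynomials
`Ring.choose : ℤ → ℕ → ℤ` solve by `Ring.choose (2j - k + i - 1) (2i)`. Times `(2i)!` this is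
the product in the statement; it is nonnegative because `2i` is even, and it vanishes exactly
when `k - 2j` lies in the range of the product.
-/

open Finset

lemma sum_range_choose_add_mul (x : ℤ) (r t : ℕ) :
    ∑ m ∈ range t, Ring.choose (x + m) r * (t - m : ℤ)
      = Ring.choose (x + t + 1) (r + 2) - Ring.choose (x + 1) (r + 2)
          - t * Ring.choose x (r + 1) := by
  let F (m : ℕ) : ℤ := Ring.choose (x + m + 1) (r + 2) + (t - m) * Ring.choose (x + m) (r + 1)
  have hF (m : ℕ) : Ring.choose (x + m) r * (t - m : ℤ) = F (m + 1) - F m := by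
    have h1 := Ring.choose_succ_succ (x + m) r
    have h2 := Ring.choose_succ_succ (x + m + 1) (r + 1)
    simp only [F, Nat.cast_succ, ← add_assoc]
    linear_combination (m - t : ℤ) * h1 - h2
  rw [sum_congr rfl fun m _ => hF m, sum_range_sub]
  simp only [F, Nat.cast_zero, add_zero, sub_zero]
  ring

lemma sum_Ico_choose_sub_mul (c : ℤ) (r : ℕ) {a b : ℕ} (hab : a ≤ b) :
    ∑ m ∈ Ico a b, Ring.choose (c - m) r * (b - m : ℤ)
      = (b - a) * Ring.choose (c - a + 1) (r + 1) - Ring.choose (c - a + 1) (r + 2)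
          + Ring.choose (c - b + 1) (r + 2) := by
  let G (m : ℕ) : ℤ := Ring.choose (c - m + 1) (r + 2) - (b - m) * Ring.choose (c - m + 1) (r + 1)
  have hG (m : ℕ) : Ring.choose (c - m) r * (b - m : ℤ) = G (m + 1) - G m := by
    have h1 := Ring.choose_succ_succ (c - m) r
    have h2 := Ring.choose_succ_succ (c - m) (r + 1)
    simp only [G, Nat.cast_succ, show c - (m + 1 : ℤ) + 1 = c - m by ring]
    linear_combination (m - b : ℤ) * h1 + h2
  rw [sum_congr rfl fun m _ => hG m, sum_Ico_sub _ hab]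
  simp only [G]
  ring

lemma prod_Icc_add_eq_factorial_mul_choose (x : ℤ) (n : ℕ) :
    ∏ s ∈ Icc (-n : ℤ) (n - 1), (x + s) = (2 * n).factorial * Ring.choose (x + n - 1) (2 * n) := by
  rw [← nsmul_eq_mul, ← Ring.descPochhammer_eq_factorial_smul_choose, ← Polynomial.eval_eq_smeval,
    descPochhammer_eval_eq_prod_range]
  refine prod_nbij' (fun s => (n - 1 - s).toNat) (fun t => n - 1 - t) ?_ ?_ ?_ ?_ ?_ <;>
    intros <;> simp_all <;> omega

lemma Ring.choose_two_mul_nonneg (y : ℤ) (n : ℕ) : 0 ≤ Ring.choose y (2 * n) := by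
  cases y with
  | ofNat m => simp [Ring.choose_natCast]
  | negSucc m =>
    rw [Int.negSucc_eq, Ring.choose_neg, Nat.cast_mul, Nat.cast_ofNat, Int.negOnePow_two_mul,
      one_smul, show (m + 1 + 2 * n - 1 : ℤ) = (m + 2 * n : ℕ) by push_cast; ring,
      Ring.choose_natCast]
    exact Nat.cast_nonneg _

def gapProd (k : ℕ) {i : ℕ} (f : Fin i → Fin k) : ℕ :=
  ∏ a : Fin i, ((if h : a.1 + 1 < i then (f ⟨a.1 + 1, h⟩).1 + 1 else k + 1) - ((f a).1 + 1))

def extendLast {d n : ℕ} (m : Fin d) (g : Fin n → Fin m) : Fin (n + 1) → Fin d :=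
  Fin.snoc (α := fun _ => Fin d) (fun a => Fin.castLE m.is_lt.le (g a)) m

section extendLast

variable {d n : ℕ} (m : Fin d) (g : Fin n → Fin m)

lemma extendLast_val (b : Fin (n + 1)) :
    (extendLast m g b).1 = if h : b.1 < n then (g ⟨b.1, h⟩).1 else m.1 := by
  unfold extendLast Fin.snoc
  split_ifs <;> rfl

@[simp] lemma extendLast_castSucc (a : Fin n) : (extendLast m g a.castSucc).1 = (g a).1 := by
  simp [extendLast_val]

@[simp] lemma extendLast_last : extendLast m g (Fin.last n) = m := by
  simp [extendLast]

lemma strictMono_extendLast {g : Fin n → Fin m} (hg : StrictMono g) :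
    StrictMono (extendLast m g) := by
  rw [Fin.strictMono_iff_lt_succ]
  intro a
  rw [Fin.lt_def, extendLast_castSucc, extendLast_val]
  split_ifs with h
  · exact hg (Fin.lt_def.mpr (by simp))
  · exact (g a).is_lt

lemma gapProd_extendLast : gapProd d (extendLast m g) = gapProd m g * (d - m) := by
  rw [gapProd, gapProd, Fin.prod_univ_castSucc]
  congr 1
  · refine prod_congr rfl fun a _ => ?_
    simp only [Fin.val_castSucc, add_lt_add_iff_right, a.is_lt, dite_true, extendLast_val]
    split_ifs <;> rfl
  · simp

lemma exists_extendLast_eq_iff (j : ℕ) :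
    (∃ b, (extendLast m g b).1 + 1 = j) ↔ (∃ a, (g a).1 + 1 = j) ∨ m.1 + 1 = j := by
  simp [Fin.exists_fin_succ']

end extendLast

lemma extendLast_init {d n : ℕ} {m : Fin d} {f : Fin (n + 1) → Fin d}
    (hm : f (Fin.last n) = m) (h : ∀ a, f a.castSucc < m) :
    extendLast m (fun a => ⟨f a.castSucc, h a⟩) = f := by
  funext b
  refine Fin.lastCases ?_ (fun a => ?_) b
  · simp [hm]
  · ext; simp

open scoped Classical in
lemma sum_strictMono_eq_sum_extendLast {M : Type*} [AddCommMonoid M] (d n : ℕ)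
    (w : (Fin (n + 1) → Fin d) → M) :
    ∑ f ∈ univ.filter StrictMono, w f
      = ∑ m : Fin d, ∑ g ∈ univ.filter (StrictMono : (Fin n → Fin m) → Prop),
          w (extendLast m g) := by
  rw [← sum_fiberwise_of_maps_to (g := fun f => f (Fin.last n)) (fun _ _ => mem_univ _)]
  refine sum_congr rfl fun m _ => ?_
  simp only [filter_filter]
  have init_lt {f : Fin (n + 1) → Fin d} (hf : StrictMono f ∧ f (Fin.last n) = m) (a : Fin n) :
      f a.castSucc < m :=
    hf.2 ▸ hf.1 (Fin.castSucc_lt_last a)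
  refine sum_bij' (fun f hf a => ⟨f a.castSucc, init_lt (by simpa using hf) a⟩)
    (fun g _ => extendLast m g) (fun f hf => ?_) (fun g hg => ?_)
    (fun f hf => extendLast_init (by simp_all) _) (fun g _ => ?_)
    (fun f hf => by rw [extendLast_init (by simp_all)])
  · simp only [mem_filter, mem_univ, true_and] at hf ⊢
    exact fun a b hab => hf.1 (Fin.castSucc_lt_castSucc_iff.mpr hab)
  · simp only [mem_filter, mem_univ, true_and] at hg ⊢
    exact ⟨strictMono_extendLast m hg, extendLast_last m g⟩
  · funext a
    ext
    simp

open scoped Classical in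
noncomputable def sigAll (t p : ℕ) : ℕ :=
  ∑ f ∈ univ.filter (StrictMono : (Fin p → Fin t) → Prop), gapProd t f

lemma sigAll_zero_right (t : ℕ) : sigAll t 0 = 1 := by
  simp [sigAll, gapProd, filter_true_of_mem fun f _ => Subsingleton.strictMono f]

lemma sigAll_succ_right (t p : ℕ) : sigAll t (p + 1) = ∑ m ∈ range t, sigAll m p * (t - m) := by
  rw [sigAll, sum_strictMono_eq_sum_extendLast, ← Fin.sum_univ_eq_sum_range]
  simp_rw [gapProd_extendLast, ← sum_mul, sigAll]

lemma sigAll_eq_choose (t p : ℕ) : sigAll t p = (t + p).choose (2 * p) := by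
  induction p generalizing t with
  | zero => simp [sigAll_zero_right]
  | succ p ih =>
    have hsum := sum_range_choose_add_mul p (2 * p) t
    simp only [← Nat.cast_add, ← Nat.cast_succ, Ring.choose_natCast] at hsum
    rw [Nat.choose_eq_zero_of_lt (show p.succ < 2 * p + 2 by omega),
      Nat.choose_eq_zero_of_lt (show p < 2 * p + 1 by omega)] at hsum
    rw [sigAll_succ_right, ← Nat.cast_inj (R := ℤ)]
    push_cast
    rw [sum_congr rfl fun m hm => by rw [ih, Nat.cast_sub (mem_range.1 hm).le, add_comm m]]
    rw [hsum, Nat.cast_zero, mul_zero, sub_zero, sub_zero, Nat.cast_inj]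
    congr 1; omega

open scoped Classical in
lemma sig_eq_sum_ite (k i j : ℕ) :
    sig k i j = ∑ f ∈ univ.filter (StrictMono : (Fin i → Fin k) → Prop),
      if ∃ a, (f a).1 + 1 = j then gapProd k f else 0 := by
  rw [sig, ← filter_filter, sum_filter]
  rfl

lemma sig_eq_zero_of_lt {k i j : ℕ} (h : k < j) : sig k i j = 0 := by
  rw [sig_eq_sum_ite]
  refine sum_eq_zero fun f _ => if_neg ?_
  rintro ⟨a, ha⟩
  have := (f a).is_lt
  omega

lemma sig_length_zero (k j : ℕ) : sig k 0 j = 0 := by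
  simp [sig_eq_sum_ite]

lemma sig_length_succ {k j : ℕ} (i : ℕ) (hj : 1 ≤ j) (hjk : j ≤ k) :
    sig k (i + 1) j = sigAll (j - 1) i * (k + 1 - j) + ∑ m ∈ Ico j k, sig m i j * (k - m) := by
  have last_eq (m : Fin k) :
      ∑ g ∈ univ.filter (StrictMono : (Fin i → Fin m) → Prop),
        (if ∃ b, (extendLast m g b).1 + 1 = j then gapProd k (extendLast m g) else 0)
      = (if m.1 = j - 1 then sigAll m i else 0) * (k - m) + sig m i j * (k - m) := by
    simp_rw [exists_extendLast_eq_iff, gapProd_extendLast]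
    by_cases hm : m.1 = j - 1
    · have hm1 : m.1 + 1 = j := by omega
      rw [if_pos hm, sig_eq_zero_of_lt (by omega : m.1 < j), zero_mul, add_zero, sigAll, sum_mul]
      simp only [hm1, or_true, if_true]
    · have hm1 : ¬m.1 + 1 = j := by omega
      rw [if_neg hm, zero_mul, zero_add, sig_eq_sum_ite, sum_mul]
      simp only [hm1, or_false, ite_mul, zero_mul]
  rw [sig_eq_sum_ite, sum_strictMono_eq_sum_extendLast, sum_congr rfl fun m _ => last_eq m,
    sum_add_distrib,
    Fin.sum_univ_eq_sum_range (fun m => (if m = j - 1 then sigAll m i else 0) * (k - m)),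
    Fin.sum_univ_eq_sum_range (fun m => sig m i j * (k - m))]
  simp_rw [ite_mul, zero_mul]
  rw [sum_ite_eq', if_pos (mem_range.2 (by omega)), range_eq_Ico,
    ← sum_Ico_consecutive _ (Nat.zero_le j) hjk,
    sum_eq_zero fun m hm => by rw [sig_eq_zero_of_lt (mem_Ico.1 hm).2, zero_mul], zero_add]
  congr 2
  omega

lemma sig_self_length_succ {j : ℕ} (i : ℕ) (hj : 1 ≤ j) : sig j (i + 1) j = sigAll (j - 1) i := by
  simpa using sig_length_succ i hj le_rfl

lemma sig_sub_sig_succ_eq_sum {k j : ℕ} (i : ℕ) (hj : 1 ≤ j) (hjk : j < k) :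
    (sig k (i + 1) j : ℤ) - sig k (i + 1) (j + 1)
      = sigAll (j - 1) i * ((k : ℤ) + 1 - j) + ((sig j i j : ℤ) - sigAll j i) * ((k : ℤ) - j)
        + ∑ m ∈ Ico (j + 1) k, ((sig m i j : ℤ) - sig m i (j + 1)) * ((k : ℤ) - m) := by
  have cast_sum (a : ℕ) (f : ℕ → ℕ) :
      ((∑ m ∈ Ico a k, f m * (k - m) : ℕ) : ℤ) = ∑ m ∈ Ico a k, (f m : ℤ) * ((k : ℤ) - m) := by
    push_cast
    exact sum_congr rfl fun m hm => by rw [Nat.cast_sub (mem_Ico.1 hm).2.le]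
  rw [sig_length_succ i hj hjk.le, sig_length_succ i (Nat.le_add_left 1 j) hjk,
    sum_eq_sum_Ico_succ_bot hjk]
  push_cast [cast_sum, Nat.cast_sub hjk.le, Nat.cast_sub (Nat.le_succ_of_le hjk.le)]
  simp only [sub_mul, sum_sub_distrib]
  ring

theorem sig_sub_sig_succ_eq_choose {k j : ℕ} (hj : 1 ≤ j) (hjk : j < k) (i : ℕ) :
    (sig k (i + 1) j : ℤ) - sig k (i + 1) (j + 1)
      = Ring.choose (2 * j - k + i - 1 : ℤ) (2 * i) := by
  induction i generalizing k with
  | zero =>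
    simp [sig_sub_sig_succ_eq_sum 0 hj hjk, sigAll_zero_right, sig_length_zero]
  | succ i ih =>
    obtain ⟨N, hN⟩ : ∃ N, N = j - 1 + i := ⟨_, rfl⟩
    rw [sig_sub_sig_succ_eq_sum (i + 1) hj hjk, sig_self_length_succ i hj,
      sum_congr rfl fun m hm => by
        rw [ih (mem_Ico.1 hm).1, show (2 * j - m + i - 1 : ℤ) = 2 * j + i - 1 - m by ring],
      sum_Ico_choose_sub_mul _ _ hjk,
      show (2 * j + i - 1 - (j + 1 : ℕ) + 1 : ℤ) = N by push_cast; omega,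
      show (2 * j - k + (i + 1 : ℕ) - 1 : ℤ) = 2 * j + i - 1 - k + 1 by push_cast; ring]
    simp only [sigAll_eq_choose, show j - 1 + (i + 1) = N + 1 by omega, ← hN,
      show j + (i + 1) = N + 2 by omega, show 2 * (i + 1) = 2 * i + 2 by ring,
      Ring.choose_natCast]
    have p1 := congrArg (Nat.cast : ℕ → ℤ) (Nat.choose_succ_succ' N (2 * i + 1))
    have p2 := congrArg (Nat.cast : ℕ → ℤ) (Nat.choose_succ_succ' (N + 1) (2 * i + 1))
    have p3 := congrArg (Nat.cast : ℕ → ℤ) (Nat.choose_succ_succ' N (2 * i))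
    push_cast at p1 p2 p3 ⊢
    linear_combination p1 - (k - j : ℤ) * p2 - (k - j : ℤ) * p3

theorem sig_difference_general (k i j : ℕ) (hi : 1 ≤ i) (hj : 1 ≤ j) (hjk : j < k) :
    ((sig k i j : ℚ) - (sig k i (j + 1) : ℚ)
        = (1 / (Nat.factorial (2 * i - 2) : ℚ))
            * ∏ s ∈ Finset.Icc ((1 : ℤ) - (i : ℤ)) ((i : ℤ) - 2),
                ((2 * (j : ℤ) - (k : ℤ) + s : ℤ) : ℚ)) ∧
    sig k i (j + 1) ≤ sig k i j ∧
    (sig k i j = sig k i (j + 1) ↔ ((k - i + 3) / 2 ≤ j ∧ j < (k + i + 1) / 2)) := by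
  obtain ⟨n, rfl⟩ : ∃ n, i = n + 1 := ⟨i - 1, by omega⟩
  have hdiff := sig_sub_sig_succ_eq_choose hj hjk n
  have hprod : ∏ s ∈ Icc ((1 : ℤ) - (n + 1 : ℕ)) ((n + 1 : ℕ) - 2), (2 * (j : ℤ) - k + s)
      = (2 * n).factorial * ((sig k (n + 1) j : ℤ) - sig k (n + 1) (j + 1)) := by
    rw [show (1 : ℤ) - (n + 1 : ℕ) = -n by push_cast; ring,
      show ((n + 1 : ℕ) : ℤ) - 2 = n - 1 by push_cast; ring,
      prod_Icc_add_eq_factorial_mul_choose, hdiff]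
  refine ⟨?_, ?_, ?_⟩
  · rw [show 2 * (n + 1) - 2 = 2 * n by omega, ← Int.cast_prod, hprod]
    push_cast
    field_simp
  · exact_mod_cast sub_nonneg.1 (hdiff ▸ Ring.choose_two_mul_nonneg _ n)
  · rw [← Int.natCast_inj, ← sub_eq_zero,
      ← mul_right_inj' (Nat.cast_ne_zero.2 (2 * n).factorial_ne_zero), mul_zero, ← hprod,
      prod_eq_zero_iff]
    constructor
    · rintro ⟨s, hs, h0⟩
      rw [mem_Icc] at hs
      omega
    · intro h
      exact ⟨k - 2 * j, mem_Icc.2 (by omega), by ring⟩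

/-- for `1 ≤ i ≤ k` and `1 ≤ j < k`,
`σ_{i,j}^{(k)} - σ_{i,j+1}^{(k)} = (1/(2i-2)!) ∏_{s=1-i}^{i-2} (2j-k+s)`
(empty product `= 1` for `i = 1`); in particular `σ_{i,j}^{(k)} ≥ σ_{i,j+1}^{(k)}`,
with equality iff `⌊(k-i+3)/2⌋ ≤ j < ⌊(k+i+1)/2⌋`. -/
theorem sig_difference (k i j : ℕ) (hi : 1 ≤ i) (hik : i ≤ k) (hj : 1 ≤ j) (hjk : j < k) :
    ((sig k i j : ℚ) - (sig k i (j + 1) : ℚ)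
        = (1 / (Nat.factorial (2 * i - 2) : ℚ))
            * ∏ s ∈ Finset.Icc ((1 : ℤ) - (i : ℤ)) ((i : ℤ) - 2),
                ((2 * (j : ℤ) - (k : ℤ) + s : ℤ) : ℚ)) ∧
    sig k i (j + 1) ≤ sig k i j ∧
    (sig k i j = sig k i (j + 1) ↔ ((k - i + 3) / 2 ≤ j ∧ j < (k + i + 1) / 2)) :=
  sig_difference_general k i j hi hj hjk
end
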